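/- arXiv:2504.07324 — 6 statements merged into one kernel-verified Lean document; each statement's English description precedes it below -/
import Mathlib

section
/- Let d, p be positive integers, let K : ℝ^d × ℝ^p → ℝ be twice continuously differentiable (jointly), let x ∈ ℝ^d, and let t̂ : ℝ^p → ℝ^d be continuously differentiable on an open set U ⊆ ℝ^p and satisfy the saddlepoint equation ∇ₜK(t̂(θ), θ) = x for all θ ∈ U, with K''(t̂(θ), θ) invertible for all θ ∈ U. Then for every θ ∈ U, the p×p Hessian matrix at θ of the map θ ↦ K(t̂(θ), θ) − ⟨t̂(θ), x⟩ equals H_θ(t̂(θ), θ) − J(t̂(θ), θ)ᵀ · K''(t̂(θ), θ)⁻¹ · J(t̂(θ), θ), where H_θ(t, θ) is the p×p Hessian of K in its second argument at fixed first argument and J(t, θ) is the d×p matrix of mixed partials ∂²K/∂θ_j∂t_i. -/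
/-!
Envelope theorem: since `∂ₜK(t̂ θ, θ) = x` near `θ`, the first derivative of
`g θ = K(t̂ θ, θ) - ⟨t̂ θ, x⟩` is just `∂_θ K(t̂ θ, θ)`. Differentiating once more along the curve
gives `D²K(t̂ θ, θ)((t̂' θ) eᵢ, eᵢ)(0, eⱼ)`, that is `H_θ + (t̂' θ)ᵀ J`. Differentiating the
saddlepoint equation gives `K'' t̂' + J = 0`, and since `K''` is symmetric and invertible,
`(t̂')ᵀ J = -Jᵀ K''⁻¹ J`.
-/

open Matrix

section Calculus

open ContinuousLinearMap Filter Topology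

variable {𝕜 : Type*} [NontriviallyNormedField 𝕜]
  {E F V W M : Type*} [NormedAddCommGroup E] [NormedSpace 𝕜 E]
  [NormedAddCommGroup F] [NormedSpace 𝕜 F] [NormedAddCommGroup V] [NormedSpace 𝕜 V]
  [NormedAddCommGroup W] [NormedSpace 𝕜 W] [NormedAddCommGroup M] [NormedSpace 𝕜 M]

theorem fderiv_partial_fst_apply {K : E × F → M} {a : E} {b : F}
    (hK : DifferentiableAt 𝕜 K (a, b)) (u : E) :
    fderiv 𝕜 (fun t => K (t, b)) a u = fderiv 𝕜 K (a, b) (u, 0) :=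
  DFunLike.congr_fun (hK.hasFDerivAt.comp a (hasFDerivAt_prodMk_left (𝕜 := 𝕜) a b)).fderiv u

theorem fderiv_partial_snd_apply {K : E × F → M} {a : E} {b : F}
    (hK : DifferentiableAt 𝕜 K (a, b)) (v : F) :
    fderiv 𝕜 (fun s => K (a, s)) b v = fderiv 𝕜 K (a, b) (0, v) :=
  DFunLike.congr_fun (hK.hasFDerivAt.comp b (hasFDerivAt_prodMk_right (𝕜 := 𝕜) a b)).fderiv v

theorem fderiv_fderiv_comp_apply {K : V → M} {G : W → V} {G' : W →L[𝕜] V} {w : W}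
    (hK : DifferentiableAt 𝕜 (fderiv 𝕜 K) (G w)) (hG : HasFDerivAt G G' w) (c : V) (v : W) :
    fderiv 𝕜 (fun y => fderiv 𝕜 K (G y) c) w v = fderiv 𝕜 (fderiv 𝕜 K) (G w) (G' v) c :=
  DFunLike.congr_fun ((apply 𝕜 M c).hasFDerivAt.comp w (hK.hasFDerivAt.comp w hG)).fderiv v

section SecondPartials

variable {K : E × F → M} (hK : ContDiff 𝕜 2 K) (a : E) (b : F)
include hK

theorem fderiv_partial_fst_partial_fst_apply (u v : E) :
    fderiv 𝕜 (fun t => fderiv 𝕜 (fun s => K (s, b)) t v) a u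
      = fderiv 𝕜 (fderiv 𝕜 K) (a, b) (u, 0) (v, 0) := by
  simp only [fun t => fderiv_partial_fst_apply (hK.differentiable two_ne_zero (t, b)) v]
  exact fderiv_fderiv_comp_apply ((hK.fderiv_right le_rfl).differentiable one_ne_zero _)
    (hasFDerivAt_prodMk_left (𝕜 := 𝕜) a b) _ _

theorem fderiv_partial_snd_partial_fst_apply (v : E) (w : F) :
    fderiv 𝕜 (fun b' => fderiv 𝕜 (fun t => K (t, b')) a v) b w
      = fderiv 𝕜 (fderiv 𝕜 K) (a, b) (0, w) (v, 0) := by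
  simp only [fun b' => fderiv_partial_fst_apply (hK.differentiable two_ne_zero (a, b')) v]
  exact fderiv_fderiv_comp_apply ((hK.fderiv_right le_rfl).differentiable one_ne_zero _)
    (hasFDerivAt_prodMk_right (𝕜 := 𝕜) a b) _ _

theorem fderiv_partial_snd_partial_snd_apply (v w : F) :
    fderiv 𝕜 (fun b' => fderiv 𝕜 (fun s => K (a, s)) b' v) b w
      = fderiv 𝕜 (fderiv 𝕜 K) (a, b) (0, w) (0, v) := by
  simp only [fun b' => fderiv_partial_snd_apply (hK.differentiable two_ne_zero (a, b')) v]
  exact fderiv_fderiv_comp_apply ((hK.fderiv_right le_rfl).differentiable one_ne_zero _)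
    (hasFDerivAt_prodMk_right (𝕜 := 𝕜) a b) _ _

end SecondPartials

section Envelope

variable {K : E × F → M} {τ : F → E} {ℓ : E →L[𝕜] M} {θ : F}

theorem DifferentiableAt.hasFDerivAt_graph (hτ : DifferentiableAt 𝕜 τ θ) :
    HasFDerivAt (fun θ => (τ θ, θ)) ((fderiv 𝕜 τ θ).prod (ContinuousLinearMap.id 𝕜 F)) θ :=
  hτ.hasFDerivAt.prodMk (hasFDerivAt_id θ)

theorem hasFDerivAt_envelope (hK : DifferentiableAt 𝕜 K (τ θ, θ))
    (hτ : DifferentiableAt 𝕜 τ θ) (hsaddle : fderiv 𝕜 (fun t => K (t, θ)) (τ θ) = ℓ) :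
    HasFDerivAt (fun θ => K (τ θ, θ) - ℓ (τ θ)) ((fderiv 𝕜 K (τ θ, θ)).comp (inr 𝕜 E F)) θ := by
  have hdecomp : (fderiv 𝕜 K (τ θ, θ)).comp (inr 𝕜 E F)
      = (fderiv 𝕜 K (τ θ, θ)).comp ((fderiv 𝕜 τ θ).prod (ContinuousLinearMap.id 𝕜 F))
        - ℓ.comp (fderiv 𝕜 τ θ) := by
    ext v
    have hsplit : ((fderiv 𝕜 τ θ v, v) : E × F) = (fderiv 𝕜 τ θ v, 0) + (0, v) := by simp
    change _ = fderiv 𝕜 K (τ θ, θ) (fderiv 𝕜 τ θ v, v) - ℓ (fderiv 𝕜 τ θ v)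
    rw [hsplit, map_add, ← hsaddle, fderiv_partial_fst_apply hK]
    abel
  rw [hdecomp]
  exact (HasFDerivAt.comp (f := fun θ => (τ θ, θ)) θ hK.hasFDerivAt hτ.hasFDerivAt_graph).sub
    (ℓ.hasFDerivAt.comp θ hτ.hasFDerivAt)

variable (hK : ContDiff 𝕜 2 K)
  (hsaddle : ∀ᶠ θ' in 𝓝 θ,
    DifferentiableAt 𝕜 τ θ' ∧ fderiv 𝕜 (fun t => K (t, θ')) (τ θ') = ℓ)
include hK hsaddle

theorem fderiv_fderiv_envelope_apply (v w : F) :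
    fderiv 𝕜 (fun θ' => fderiv 𝕜 (fun θ'' => K (τ θ'', θ'') - ℓ (τ θ'')) θ' v) θ w
      = fderiv 𝕜 (fderiv 𝕜 K) (τ θ, θ) (fderiv 𝕜 τ θ w, w) (0, v) := by
  have hev : (fun θ' => fderiv 𝕜 (fun θ'' => K (τ θ'', θ'') - ℓ (τ θ'')) θ' v)
      =ᶠ[𝓝 θ] fun θ' => fderiv 𝕜 K (τ θ', θ') (0, v) :=
    hsaddle.mono fun θ' h =>
      DFunLike.congr_fun (hasFDerivAt_envelope (hK.differentiable two_ne_zero _) h.1 h.2).fderiv v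
  rw [hev.fderiv_eq]
  exact fderiv_fderiv_comp_apply ((hK.fderiv_right le_rfl).differentiable one_ne_zero _)
    hsaddle.self_of_nhds.1.hasFDerivAt_graph _ _

theorem fderiv_fderiv_apply_fst_eq_zero_of_saddlepoint (w : F) (u : E) :
    fderiv 𝕜 (fderiv 𝕜 K) (τ θ, θ) (fderiv 𝕜 τ θ w, w) (u, 0) = 0 := by
  have hev : (fun θ' => fderiv 𝕜 K (τ θ', θ') (u, 0)) =ᶠ[𝓝 θ] fun _ => ℓ u :=
    hsaddle.mono fun θ' h => by
      rw [← h.2, fderiv_partial_fst_apply (hK.differentiable two_ne_zero _)]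
  have hderiv := fderiv_fderiv_comp_apply
    ((hK.fderiv_right le_rfl).differentiable one_ne_zero _)
    hsaddle.self_of_nhds.1.hasFDerivAt_graph (u, 0) w
  rw [hev.fderiv_eq, fderiv_const_apply] at hderiv
  exact hderiv.symm

end Envelope

end Calculus

theorem Matrix.transpose_mul_eq_neg_of_mul_eq_neg {m n R : Type*} [Fintype n] [DecidableEq n]
    [CommRing R] {H : Matrix n n R} {D J : Matrix n m R} (hHt : Hᵀ = H) (hH : IsUnit H.det)
    (hHD : H * D = -J) : Dᵀ * J = -(Jᵀ * H⁻¹ * J) := by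
  have hD : D = -(H⁻¹ * J) := by
    rw [← Matrix.mul_neg, ← hHD, ← Matrix.mul_assoc, Matrix.nonsing_inv_mul _ hH, Matrix.one_mul]
  rw [hD, transpose_neg, transpose_mul, transpose_nonsing_inv, hHt, Matrix.neg_mul,
    Matrix.mul_assoc]

section Coordinates

open ContinuousLinearMap

variable {𝕜 : Type*} [NontriviallyNormedField 𝕜] {ι κ : Type*} [Fintype ι] [DecidableEq ι]
  [Fintype κ] [DecidableEq κ]

theorem ContinuousLinearMap.apply_mk_zero_eq_sum {F M : Type*} [NormedAddCommGroup F]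
    [NormedSpace 𝕜 F] [NormedAddCommGroup M] [NormedSpace 𝕜 M]
    (L : (ι → 𝕜) × F →L[𝕜] M) (u : ι → 𝕜) :
    L (u, 0) = ∑ k, u k • L (Pi.single k 1, 0) := by
  have hsingle : ∀ k : ι, (fun j => if k = j then (1 : 𝕜) else 0) = Pi.single k 1 :=
    fun k => funext fun j => by simp [Pi.single_apply, @eq_comm _ j]
  have h := (L.comp (inl 𝕜 _ F)).toLinearMap.pi_apply_eq_sum_univ u
  simp only [hsingle] at h
  exact h

theorem schur_complement_of_orthogonal_graph
    (A : (ι → 𝕜) × (κ → 𝕜) →L[𝕜] (ι → 𝕜) × (κ → 𝕜) →L[𝕜] 𝕜) (hA : ∀ u v, A u v = A v u)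
    (D : (κ → 𝕜) →L[𝕜] (ι → 𝕜)) (hD : ∀ w u, A (D w, w) (u, 0) = 0)
    {H : Matrix ι ι 𝕜} {J : Matrix ι κ 𝕜} {Hθ : Matrix κ κ 𝕜}
    (hH : ∀ i j, H i j = A (Pi.single i 1, 0) (Pi.single j 1, 0))
    (hJ : ∀ i j, J i j = A (0, Pi.single j 1) (Pi.single i 1, 0))
    (hHθ : ∀ i j, Hθ i j = A (0, Pi.single i 1) (0, Pi.single j 1)) (hdet : IsUnit H.det) :
    Matrix.of (fun i j => A (D (Pi.single i 1), Pi.single i 1) (0, Pi.single j 1))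
      = Hθ - Jᵀ * H⁻¹ * J := by
  set Dm : Matrix ι κ 𝕜 := Matrix.of fun k j => D (Pi.single j 1) k
  have hsplit : ∀ u w y, A (u, w) y = ∑ k, u k * A (Pi.single k 1, 0) y + A (0, w) y := by
    intro u w y
    rw [← add_zero u, ← zero_add w, ← Prod.mk_add_mk, map_add, _root_.add_apply,
      A.apply_mk_zero_eq_sum, _root_.sum_apply]
    simp
  have hHt : Hᵀ = H := by
    ext i j; rw [transpose_apply, hH, hH, hA]
  have hHD : H * Dm = -J := by
    ext k j
    have := hD (Pi.single j 1) (Pi.single k 1)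
    rw [hsplit, ← hJ] at this
    simp only [mul_apply, Matrix.neg_apply, Dm, of_apply, hH]
    rw [eq_neg_iff_add_eq_zero, ← this]
    exact congrArg (· + J k j) (Finset.sum_congr rfl fun m _ => by rw [hA, mul_comm])
  have hLHS : Matrix.of (fun i j => A (D (Pi.single i 1), Pi.single i 1) (0, Pi.single j 1))
      = Hθ + Dmᵀ * J := by
    ext i j
    rw [of_apply, hsplit]
    simp only [Matrix.add_apply, mul_apply, transpose_apply, Dm, of_apply, hJ, hHθ]
    rw [add_comm]
    exact congrArg (_ + ·) (Finset.sum_congr rfl fun k _ => by rw [hA])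
  rw [hLHS, transpose_mul_eq_neg_of_mul_eq_neg hHt hdet hHD, sub_eq_add_neg]

end Coordinates

theorem stmt3_general (d p : ℕ)
    (K : (Fin d → ℝ) × (Fin p → ℝ) → ℝ) (hK : ContDiff ℝ 2 K)
    (x : Fin d → ℝ)
    (U : Set (Fin p → ℝ)) (hU : IsOpen U)
    (that : (Fin p → ℝ) → (Fin d → ℝ))
    (hdiff : ContDiffOn ℝ 1 that U)
    (hsaddle : ∀ θ ∈ U, ∀ i : Fin d,
      fderiv ℝ (fun t => K (t, θ)) (that θ) (Pi.single i 1) = x i)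
    (H : (Fin p → ℝ) → Matrix (Fin d) (Fin d) ℝ)
    (hH : ∀ θ i j, H θ i j =
      fderiv ℝ (fun t => fderiv ℝ (fun s => K (s, θ)) t (Pi.single j 1)) (that θ)
        (Pi.single i 1))
    (hHinv : ∀ θ ∈ U, IsUnit (H θ).det)
    (Hθ : (Fin p → ℝ) → Matrix (Fin p) (Fin p) ℝ)
    (hHθ : ∀ θ i j, Hθ θ i j =
      fderiv ℝ (fun θ1 => fderiv ℝ (fun θ2 => K (that θ, θ2)) θ1 (Pi.single j 1)) θ
        (Pi.single i 1))
    (J : (Fin p → ℝ) → Matrix (Fin d) (Fin p) ℝ)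
    (hJ : ∀ θ i j, J θ i j =
      fderiv ℝ (fun θ' => fderiv ℝ (fun t => K (t, θ')) (that θ) (Pi.single i 1)) θ
        (Pi.single j 1)) :
    ∀ θ ∈ U,
      (Matrix.of fun i j =>
        fderiv ℝ
          (fun θ1 =>
            fderiv ℝ (fun θ2 => K (that θ2, θ2) - ∑ k : Fin d, that θ2 k * x k) θ1
              (Pi.single j 1))
          θ (Pi.single i 1))
      = Hθ θ - (J θ)ᵀ * (H θ)⁻¹ * J θ := by
  intro θ hθ
  set ℓ : (Fin d → ℝ) →L[ℝ] ℝ := ∑ k, (ContinuousLinearMap.proj k).smulRight (x k)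
  have hℓ : ∀ v, ∑ k, v k * x k = ℓ v := fun v => by simp [ℓ]
  have hsaddleℓ : ∀ᶠ θ' in nhds θ,
      DifferentiableAt ℝ that θ' ∧ fderiv ℝ (fun t => K (t, θ')) (that θ') = ℓ := by
    filter_upwards [hU.mem_nhds hθ] with θ' hθ'
    refine ⟨(hdiff.contDiffAt (hU.mem_nhds hθ')).differentiableAt one_ne_zero, ?_⟩
    refine ContinuousLinearMap.coe_injective (LinearMap.pi_ext' fun i => LinearMap.ext_ring ?_)
    simp [hsaddle θ' hθ' i, ← hℓ, Pi.single_apply]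
  simp only [hℓ, fderiv_fderiv_envelope_apply hK hsaddleℓ]
  exact schur_complement_of_orthogonal_graph _ (hK.contDiffAt.isSymmSndFDerivAt (by simp)) _
    (fderiv_fderiv_apply_fst_eq_zero_of_saddlepoint hK hsaddleℓ)
    (fun i j => by rw [hH, fderiv_partial_fst_partial_fst_apply hK])
    (fun i j => by rw [hJ, fderiv_partial_snd_partial_fst_apply hK])
    (fun i j => by rw [hHθ, fderiv_partial_snd_partial_snd_apply hK]) (hHinv θ hθ)

/-- the Hessian (in `θ`) of the saddlepoint log-likelihood leading
term `θ ↦ K(t̂(θ),θ) − ⟨t̂(θ),x⟩` equals `H_θ − Jᵀ K''⁻¹ J` evaluated at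
`(t̂(θ),θ)`. -/
theorem stmt3 (d p : ℕ) (hd : 0 < d) (hp : 0 < p)
    (K : (Fin d → ℝ) × (Fin p → ℝ) → ℝ) (hK : ContDiff ℝ 2 K)
    (x : Fin d → ℝ)
    (U : Set (Fin p → ℝ)) (hU : IsOpen U)
    (that : (Fin p → ℝ) → (Fin d → ℝ))
    (hdiff : ContDiffOn ℝ 1 that U)
    (hsaddle : ∀ θ ∈ U, ∀ i : Fin d,
      fderiv ℝ (fun t => K (t, θ)) (that θ) (Pi.single i 1) = x i)
    (H : (Fin p → ℝ) → Matrix (Fin d) (Fin d) ℝ)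
    (hH : ∀ θ i j, H θ i j =
      fderiv ℝ (fun t => fderiv ℝ (fun s => K (s, θ)) t (Pi.single j 1)) (that θ)
        (Pi.single i 1))
    (hHinv : ∀ θ ∈ U, IsUnit (H θ).det)
    (Hθ : (Fin p → ℝ) → Matrix (Fin p) (Fin p) ℝ)
    (hHθ : ∀ θ i j, Hθ θ i j =
      fderiv ℝ (fun θ1 => fderiv ℝ (fun θ2 => K (that θ, θ2)) θ1 (Pi.single j 1)) θ
        (Pi.single i 1))
    (J : (Fin p → ℝ) → Matrix (Fin d) (Fin p) ℝ)
    (hJ : ∀ θ i j, J θ i j =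
      fderiv ℝ (fun θ' => fderiv ℝ (fun t => K (t, θ')) (that θ) (Pi.single i 1)) θ
        (Pi.single j 1)) :
    ∀ θ ∈ U,
      (Matrix.of fun i j =>
        fderiv ℝ
          (fun θ1 =>
            fderiv ℝ (fun θ2 => K (that θ2, θ2) - ∑ k : Fin d, that θ2 k * x k) θ1
              (Pi.single j 1))
          θ (Pi.single i 1))
      = Hθ θ - (J θ)ᵀ * (H θ)⁻¹ * J θ :=
  stmt3_general d p K hK x U hU that hdiff hsaddle H hH hHinv Hθ hHθ J hJ
end

section
/- Let d, p be positive integers, let K : ℝ^d × ℝ^p → ℝ be twice continuously differentiable (jointly) with K(0, θ) = 0 for every θ ∈ ℝ^p, let θ₀ ∈ ℝ^p, set x = ∇ₜK(0, θ₀), and let t̂ : ℝ^p → ℝ^d be continuously differentiable on a neighborhood of θ₀ with t̂(θ₀) = 0 and ∇ₜK(t̂(θ), θ) = x for all θ in that neighborhood. Assume K''(0, θ₀) is positive definite. Then the p×p Hessian matrix at θ₀ of the map θ ↦ K(t̂(θ), θ) − ⟨t̂(θ), x⟩ equals −J(0, θ₀)ᵀ · K''(0, θ₀)⁻¹ ·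 J(0, θ₀), where J(t, θ) is the d×p matrix of mixed partials ∂²K/∂θ_j∂t_i; moreover this Hessian is negative definite if and only if J(0, θ₀) has rank p. -/
open Matrix

/-- A real symmetric matrix is negative definite if `vᵀ S v < 0` for every
nonzero vector `v`. -/
def Matrix.IsNegDef {n : Type*} [Fintype n] (M : Matrix n n ℝ) : Prop :=
  M.IsSymm ∧ ∀ v : n → ℝ, v ≠ 0 → v ⬝ᵥ M *ᵥ v < 0

open Filter Topology

/-! Let `B = D²K(0, θ₀)` and `T = Dt̂(θ₀)`. Since `∂ₜK(t̂ θ, θ) = x` near `θ₀`, the envelope theorem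
gives `Dφ(θ) = ∂_θK(t̂ θ, θ)` for the profile `φ(θ) = K(t̂ θ, θ) - ⟨t̂ θ, x⟩`, so
`D²φ(θ₀)(v, w) = B((T v, v), (0, w))`. Differentiating the saddle equation gives
`B((T v, v), (u, 0)) = 0`, i.e. `H T = -J`, and `K(0, ·) = 0` kills the `θθ` block of `B`. Hence
`D²φ(θ₀) = Tᵀ J = -Jᵀ H⁻¹ J`, whose quadratic form is `-(J v)ᵀ H⁻¹ (J v)`: it is negative definite
exactly when `J` is injective, i.e. has rank `p`. -/

namespace Matrix

variable {m n : Type*}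

theorem isNegDef_neg_iff_posDef [Fintype n] {M : Matrix n n ℝ} : (-M).IsNegDef ↔ M.PosDef := by
  simp only [IsNegDef, posDef_iff_dotProduct_mulVec, isHermitian_iff_isSymm, IsSymm, transpose_neg,
    neg_inj, neg_mulVec, dotProduct_neg, neg_neg_iff_pos, star_trivial]

theorem rank_eq_card_iff_injective_mulVec [Fintype n] {K : Type*} [Field K] (A : Matrix m n K) :
    A.rank = Fintype.card n ↔ Function.Injective A.mulVec := by
  rw [mulVec_injective_iff, linearIndependent_iff_card_eq_finrank_span,
    rank_eq_finrank_span_cols, Set.finrank, eq_comm]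

theorem posDef_transpose_mul_mul_iff [Fintype m] [Fintype n] {H : Matrix m m ℝ} (hH : H.PosDef)
    (J : Matrix m n ℝ) : (Jᵀ * H * J).PosDef ↔ Function.Injective J.mulVec := by
  refine ⟨fun h => ?_, fun hJ => by simpa using hH.conjTranspose_mul_mul_same hJ⟩
  rw [← coe_mulVecLin, ← LinearMap.ker_eq_bot, ker_mulVecLin_eq_bot_iff]
  intro v hv
  by_contra hv0
  simpa [← mulVec_mulVec, hv] using (posDef_iff_dotProduct_mulVec.mp h).2 hv0

theorem transpose_mul_eq_neg_of_mul_eq_neg_s5 [Fintype m] [DecidableEq m] {K : Type*} [CommRing K]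
    {H : Matrix m m K} (hH : IsUnit H.det) (hHsymm : H.IsSymm) {J T : Matrix m n K}
    (hT : H * T = -J) :
    Tᵀ * J = -(Jᵀ * H⁻¹ * J) := by
  have hT' : T = -(H⁻¹ * J) := by rw [← nonsing_inv_mul_cancel_left H T hH, hT, Matrix.mul_neg]
  rw [hT', transpose_neg, transpose_mul, transpose_nonsing_inv, hHsymm.eq, Matrix.neg_mul]

end Matrix

theorem ContinuousLinearMap.apply_prodMk_eq_sum {m F M : Type*} [Fintype m] [DecidableEq m]
    [NormedAddCommGroup F] [NormedSpace ℝ F] [NormedAddCommGroup M] [NormedSpace ℝ M]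
    (A : (m → ℝ) × F →L[ℝ] M) (u : m → ℝ) (v : F) :
    A (u, v) = ∑ k, u k • A (Pi.single k 1, 0) + A (0, v) := by
  have hu : (u, (0 : F)) = ∑ k, u k • ((Pi.single k 1 : m → ℝ), (0 : F)) := by
    ext <;> simp [Prod.fst_sum, Prod.snd_sum, Finset.sum_apply, Pi.single_apply]
  rw [show (u, v) = (u, 0) + (0, v) by simp, map_add, hu, map_sum]
  simp_rw [map_smul]

section Calculus

variable {E F W : Type*} [NormedAddCommGroup E] [NormedSpace ℝ E] [NormedAddCommGroup F]
  [NormedSpace ℝ F] [NormedAddCommGroup W] [NormedSpace ℝ W]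

theorem fderiv_fderiv_apply_comp {G : Type*} [NormedAddCommGroup G] [NormedSpace ℝ G]
    {f : G → W} {g : E → G} {g' : E →L[ℝ] G} {x : E}
    (hf : DifferentiableAt ℝ (fderiv ℝ f) (g x)) (hg : HasFDerivAt g g' x) (v : G) (w : E) :
    fderiv ℝ (fun y => fderiv ℝ f (g y) v) x w = fderiv ℝ (fderiv ℝ f) (g x) (g' w) v := by
  have h : HasFDerivAt (fun y => fderiv ℝ f (g y) v)
      (.apply ℝ W v ∘L fderiv ℝ (fderiv ℝ f) (g x) ∘L g') x :=
    (ContinuousLinearMap.apply ℝ W v).hasFDerivAt.comp x (hf.hasFDerivAt.comp x hg)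
  rw [h.fderiv]
  rfl

variable {K : E × F → W}

theorem fderiv_partial_fst {t : E} {θ : F} (hK : DifferentiableAt ℝ K (t, θ)) (v : E) :
    fderiv ℝ (fun s => K (s, θ)) t v = fderiv ℝ K (t, θ) (v, 0) := by
  have h : HasFDerivAt (fun s => K (s, θ)) (fderiv ℝ K (t, θ) ∘L .inl ℝ E F) t :=
    hK.hasFDerivAt.comp t (hasFDerivAt_prodMk_left t θ)
  rw [h.fderiv]
  rfl

theorem fderiv_partial_snd {t : E} {θ : F} (hK : DifferentiableAt ℝ K (t, θ)) (w : F) :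
    fderiv ℝ (fun η => K (t, η)) θ w = fderiv ℝ K (t, θ) (0, w) := by
  have h : HasFDerivAt (fun η => K (t, η)) (fderiv ℝ K (t, θ) ∘L .inr ℝ E F) θ :=
    hK.hasFDerivAt.comp θ (hasFDerivAt_prodMk_right t θ)
  rw [h.fderiv]
  rfl

theorem fderiv_fderiv_partial_fst (hK : Differentiable ℝ K) {t : E} {θ : F}
    (hK' : DifferentiableAt ℝ (fderiv ℝ K) (t, θ)) (u v : E) :
    fderiv ℝ (fun s => fderiv ℝ (fun r => K (r, θ)) s v) t u
      = fderiv ℝ (fderiv ℝ K) (t, θ) (u, 0) (v, 0) := by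
  simp only [fderiv_partial_fst (hK _)]
  exact fderiv_fderiv_apply_comp (g := fun s => (s, θ)) hK' (hasFDerivAt_prodMk_left t θ) _ _

theorem fderiv_fderiv_partial_snd_fst (hK : Differentiable ℝ K) {t : E} {θ : F}
    (hK' : DifferentiableAt ℝ (fderiv ℝ K) (t, θ)) (v : E) (w : F) :
    fderiv ℝ (fun η => fderiv ℝ (fun s => K (s, η)) t v) θ w
      = fderiv ℝ (fderiv ℝ K) (t, θ) (0, w) (v, 0) := by
  simp only [fderiv_partial_fst (hK _)]
  exact fderiv_fderiv_apply_comp (g := fun η => (t, η)) hK' (hasFDerivAt_prodMk_right t θ) _ _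

theorem fderiv_fderiv_snd_snd_eq_zero (hK : Differentiable ℝ K) {t : E} {θ : F}
    (hK' : DifferentiableAt ℝ (fderiv ℝ K) (t, θ)) (hK0 : ∀ η, K (t, η) = 0) (v w : F) :
    fderiv ℝ (fderiv ℝ K) (t, θ) (0, v) (0, w) = 0 := by
  have hK0' : (fun η => fderiv ℝ K (t, η) (0, w)) = fun _ => 0 := by
    funext η
    rw [← fderiv_partial_snd (hK _), funext hK0, fderiv_fun_const]
    rfl
  have := fderiv_fderiv_apply_comp (g := fun η => (t, η)) hK' (hasFDerivAt_prodMk_right t θ)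
    (0, w) v
  rw [hK0', fderiv_fun_const] at this
  exact this.symm

variable {that : F → E} {θ₀ : F}

theorem fderiv_fderiv_apply_graph (hK' : DifferentiableAt ℝ (fderiv ℝ K) (that θ₀, θ₀))
    (hthat : DifferentiableAt ℝ that θ₀) (z : E × F) (v : F) :
    fderiv ℝ (fun θ => fderiv ℝ K (that θ, θ) z) θ₀ v
      = fderiv ℝ (fderiv ℝ K) (that θ₀, θ₀) (fderiv ℝ that θ₀ v, v) z :=
  fderiv_fderiv_apply_comp (g := fun θ => (that θ, θ)) hK'
    (hthat.hasFDerivAt.prodMk (hasFDerivAt_id θ₀)) z v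

theorem fderiv_envelope {ℓ : E →L[ℝ] W} {θ : F} (hK : DifferentiableAt ℝ K (that θ, θ))
    (hthat : DifferentiableAt ℝ that θ) (hsaddle : ∀ u, fderiv ℝ K (that θ, θ) (u, 0) = ℓ u)
    (w : F) :
    fderiv ℝ (fun η => K (that η, η) - ℓ (that η)) θ w = fderiv ℝ K (that θ, θ) (0, w) := by
  have h : HasFDerivAt (fun η => K (that η, η) - ℓ (that η))
      (fderiv ℝ K (that θ, θ) ∘L (fderiv ℝ that θ).prod (.id ℝ F) - ℓ ∘L fderiv ℝ that θ) θ :=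
    (hK.hasFDerivAt.comp (f := fun η => (that η, η)) θ
      (hthat.hasFDerivAt.prodMk (hasFDerivAt_id θ))).sub
      (ℓ.hasFDerivAt.comp θ hthat.hasFDerivAt)
  rw [h.fderiv, _root_.sub_apply, sub_eq_iff_eq_add', ContinuousLinearMap.comp_apply,
    ContinuousLinearMap.comp_apply, ← hsaddle, ← map_add]
  simp

theorem fderiv_fderiv_envelope {ℓ : E →L[ℝ] W} (hK : Differentiable ℝ K)
    (hK' : DifferentiableAt ℝ (fderiv ℝ K) (that θ₀, θ₀))
    (hthat : ∀ᶠ θ in 𝓝 θ₀, DifferentiableAt ℝ that θ)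
    (hsaddle : ∀ᶠ θ in 𝓝 θ₀, ∀ u, fderiv ℝ K (that θ, θ) (u, 0) = ℓ u) (v w : F) :
    fderiv ℝ (fun θ => fderiv ℝ (fun η => K (that η, η) - ℓ (that η)) θ w) θ₀ v
      = fderiv ℝ (fderiv ℝ K) (that θ₀, θ₀) (fderiv ℝ that θ₀ v, v) (0, w) := by
  have hfirst : (fun θ => fderiv ℝ (fun η => K (that η, η) - ℓ (that η)) θ w)
      =ᶠ[𝓝 θ₀] fun θ => fderiv ℝ K (that θ, θ) (0, w) := by
    filter_upwards [hthat, hsaddle] with θ hθ hsθ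
    exact fderiv_envelope (hK _) hθ hsθ w
  rw [hfirst.fderiv_eq, fderiv_fderiv_apply_graph hK' hthat.self_of_nhds]

theorem fderiv_fderiv_saddle_eq_zero {ℓ : E →L[ℝ] W}
    (hK' : DifferentiableAt ℝ (fderiv ℝ K) (that θ₀, θ₀)) (hthat : DifferentiableAt ℝ that θ₀)
    (hsaddle : ∀ᶠ θ in 𝓝 θ₀, ∀ u, fderiv ℝ K (that θ, θ) (u, 0) = ℓ u) (v : F) (u : E) :
    fderiv ℝ (fderiv ℝ K) (that θ₀, θ₀) (fderiv ℝ that θ₀ v, v) (u, 0) = 0 := by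
  have hconst : (fun θ => fderiv ℝ K (that θ, θ) (u, 0)) =ᶠ[𝓝 θ₀] fun _ => ℓ u := by
    filter_upwards [hsaddle] with θ hθ using hθ u
  rw [← fderiv_fderiv_apply_graph hK' hthat, hconst.fderiv_eq, fderiv_fun_const]
  rfl

end Calculus

theorem bilinear_on_graph_eq_neg_transpose_mul_inv_mul {m n : Type*} [Fintype m] [DecidableEq m]
    [Fintype n] [DecidableEq n]
    (B : (m → ℝ) × (n → ℝ) →L[ℝ] (m → ℝ) × (n → ℝ) →L[ℝ] ℝ) (hB : ∀ a b, B a b = B b a)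
    (T : (n → ℝ) →L[ℝ] m → ℝ) {H : Matrix m m ℝ} (hHpos : H.PosDef) {J : Matrix m n ℝ}
    {L : Matrix n n ℝ}
    (hH : ∀ i j, H i j = B (Pi.single i 1, 0) (Pi.single j 1, 0))
    (hJ : ∀ i j, J i j = B (0, Pi.single j 1) (Pi.single i 1, 0))
    (hT : ∀ v u, B (T v, v) (u, 0) = 0) (hBnn : ∀ v w, B (0, v) (0, w) = 0)
    (hL : ∀ i j, L i j = B (T (Pi.single i 1), Pi.single i 1) (0, Pi.single j 1)) :
    L = -(Jᵀ * H⁻¹ * J) := by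
  set Tm : Matrix m n ℝ := Matrix.of fun k j => T (Pi.single j 1) k
  have hHT : H * Tm = -J := by
    ext i j
    have h := hT (Pi.single j 1) (Pi.single i 1)
    rw [B.apply_prodMk_eq_sum, _root_.add_apply, _root_.sum_apply] at h
    rw [mul_apply, neg_apply, hJ, eq_neg_iff_add_eq_zero, ← h]
    congr 1
    refine Finset.sum_congr rfl fun k _ => ?_
    rw [hH, hB, _root_.smul_apply, smul_eq_mul, mul_comm]
    rfl
  have hLT : L = Tmᵀ * J := by
    ext i j
    rw [hL, B.apply_prodMk_eq_sum, _root_.add_apply, hBnn, add_zero,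
      _root_.sum_apply, mul_apply]
    refine Finset.sum_congr rfl fun k _ => ?_
    rw [hJ, hB, _root_.smul_apply, smul_eq_mul]
    rfl
  rw [hLT]
  exact transpose_mul_eq_neg_of_mul_eq_neg_s5 hHpos.det_pos.ne'.isUnit
    (isHermitian_iff_isSymm.mp hHpos.isHermitian) hHT

theorem stmt5_general (d p : ℕ)
    (K : (Fin d → ℝ) × (Fin p → ℝ) → ℝ) (hK : ContDiff ℝ 2 K)
    (hK0 : ∀ θ : Fin p → ℝ, K (0, θ) = 0)
    (θ₀ : Fin p → ℝ)
    (x : Fin d → ℝ)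
    (that : (Fin p → ℝ) → (Fin d → ℝ))
    (U : Set (Fin p → ℝ)) (hU : IsOpen U) (hθ₀U : θ₀ ∈ U)
    (hdiff : ContDiffOn ℝ 1 that U)
    (hthat0 : that θ₀ = 0)
    (hsaddle : ∀ θ ∈ U, ∀ i : Fin d,
      fderiv ℝ (fun t => K (t, θ)) (that θ) (Pi.single i 1) = x i)
    (H : Matrix (Fin d) (Fin d) ℝ)
    (hH : ∀ i j, H i j =
      fderiv ℝ (fun t => fderiv ℝ (fun s => K (s, θ₀)) t (Pi.single j 1)) 0
        (Pi.single i 1))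
    (hHpos : H.PosDef)
    (J : Matrix (Fin d) (Fin p) ℝ)
    (hJ : ∀ i j, J i j =
      fderiv ℝ (fun θ' => fderiv ℝ (fun t => K (t, θ')) 0 (Pi.single i 1)) θ₀
        (Pi.single j 1))
    (L2 : Matrix (Fin p) (Fin p) ℝ)
    (hL2 : ∀ i j, L2 i j =
      fderiv ℝ
        (fun θ1 =>
          fderiv ℝ (fun θ2 => K (that θ2, θ2) - ∑ k : Fin d, that θ2 k * x k) θ1
            (Pi.single j 1))
        θ₀ (Pi.single i 1)) :
    L2 = -(Jᵀ * H⁻¹ * J) ∧ (L2.IsNegDef ↔ J.rank = p) := by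
  have hK1 : Differentiable ℝ K := hK.differentiable (by norm_num)
  have hK2 : Differentiable ℝ (fderiv ℝ K) :=
    (hK.fderiv_right (m := 1) (by norm_num)).differentiable one_ne_zero
  have hthat : ∀ᶠ θ in 𝓝 θ₀, DifferentiableAt ℝ that θ := by
    filter_upwards [hU.mem_nhds hθ₀U] with θ hθ
    exact (hdiff.differentiableOn one_ne_zero).differentiableAt (hU.mem_nhds hθ)
  obtain ⟨ℓ, hℓ⟩ : ∃ ℓ : (Fin d → ℝ) →L[ℝ] ℝ, ∀ u, ℓ u = ∑ k, u k * x k :=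
    ⟨∑ k, x k • ContinuousLinearMap.proj k, fun u => by simp [mul_comm]⟩
  have hsaddle_clm : ∀ᶠ θ in 𝓝 θ₀, ∀ u, fderiv ℝ K (that θ, θ) (u, 0) = ℓ u := by
    filter_upwards [hU.mem_nhds hθ₀U] with θ hθ u
    rw [ContinuousLinearMap.apply_prodMk_eq_sum, Prod.mk_zero_zero, map_zero, add_zero, hℓ]
    refine Finset.sum_congr rfl fun k _ => ?_
    rw [← fderiv_partial_fst (hK1 _), hsaddle θ hθ, smul_eq_mul]
  have hprofile : (fun θ => K (that θ, θ) - ∑ k, that θ k * x k)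
      = fun θ => K (that θ, θ) - ℓ (that θ) := by
    simp only [hℓ]
  have hL2eq : L2 = -(Jᵀ * H⁻¹ * J) := by
    refine bilinear_on_graph_eq_neg_transpose_mul_inv_mul (fderiv ℝ (fderiv ℝ K) (that θ₀, θ₀))
      (second_derivative_symmetric (fun y => (hK1 y).hasFDerivAt) (hK2 _).hasFDerivAt)
      (fderiv ℝ that θ₀) hHpos (fun i j => ?_) (fun i j => ?_)
      (fderiv_fderiv_saddle_eq_zero (hK2 _) hthat.self_of_nhds hsaddle_clm) (fun v w => ?_)
      (fun i j => ?_)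
    · rw [hH, fderiv_fderiv_partial_fst hK1 (hK2 _), hthat0]
    · rw [hJ, fderiv_fderiv_partial_snd_fst hK1 (hK2 _), hthat0]
    · rw [hthat0]
      exact fderiv_fderiv_snd_snd_eq_zero hK1 (hK2 _) hK0 v w
    · rw [hL2, hprofile, fderiv_fderiv_envelope hK1 (hK2 _) hthat hsaddle_clm]
  refine ⟨hL2eq, ?_⟩
  rw [hL2eq, isNegDef_neg_iff_posDef, posDef_transpose_mul_mul_iff hHpos.inv,
    ← rank_eq_card_iff_injective_mulVec, Fintype.card_fin]

/-- in a well-specified model (`K(0,θ)=0`, `x = ∇ₜK(0,θ₀)`,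
`t̂(θ₀)=0`), the Hessian at `θ₀` of `θ ↦ K(t̂(θ),θ) − ⟨t̂(θ),x⟩` equals
`−J(0,θ₀)ᵀ K''(0,θ₀)⁻¹ J(0,θ₀)`, and it is negative definite iff
`J(0,θ₀)` has rank `p`. -/
theorem stmt5 (d p : ℕ) (hd : 0 < d) (hp : 0 < p)
    (K : (Fin d → ℝ) × (Fin p → ℝ) → ℝ) (hK : ContDiff ℝ 2 K)
    (hK0 : ∀ θ : Fin p → ℝ, K (0, θ) = 0)
    (θ₀ : Fin p → ℝ)
    (x : Fin d → ℝ)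
    (hx : ∀ i : Fin d, x i = fderiv ℝ (fun t => K (t, θ₀)) 0 (Pi.single i 1))
    (that : (Fin p → ℝ) → (Fin d → ℝ))
    (U : Set (Fin p → ℝ)) (hU : IsOpen U) (hθ₀U : θ₀ ∈ U)
    (hdiff : ContDiffOn ℝ 1 that U)
    (hthat0 : that θ₀ = 0)
    (hsaddle : ∀ θ ∈ U, ∀ i : Fin d,
      fderiv ℝ (fun t => K (t, θ)) (that θ) (Pi.single i 1) = x i)
    (H : Matrix (Fin d) (Fin d) ℝ)
    (hH : ∀ i j, H i j =
      fderiv ℝ (fun t => fderiv ℝ (fun s => K (s, θ₀)) t (Pi.single j 1)) 0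
        (Pi.single i 1))
    (hHpos : H.PosDef)
    (J : Matrix (Fin d) (Fin p) ℝ)
    (hJ : ∀ i j, J i j =
      fderiv ℝ (fun θ' => fderiv ℝ (fun t => K (t, θ')) 0 (Pi.single i 1)) θ₀
        (Pi.single j 1))
    (L2 : Matrix (Fin p) (Fin p) ℝ)
    (hL2 : ∀ i j, L2 i j =
      fderiv ℝ
        (fun θ1 =>
          fderiv ℝ (fun θ2 => K (that θ2, θ2) - ∑ k : Fin d, that θ2 k * x k) θ1
            (Pi.single j 1))
        θ₀ (Pi.single i 1)) :
    L2 = -(Jᵀ * H⁻¹ * J) ∧ (L2.IsNegDef ↔ J.rank = p) :=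
  stmt5_general d p K hK hK0 θ₀ x that U hU hθ₀U hdiff hthat0 hsaddle H hH hHpos J hJ L2 hL2
end

section
/- Let p, d be positive integers, (θ₀, u₀) ∈ ℝ^p × ℝ^d. Let a, b, c : ℝ^p × ℝ^d → ℝ^p be twice continuously differentiable, and let h : ℝ^p × ℝ^d × ℝ → ℝ^p be twice continuously differentiable with h(θ, u, 0) = 0 and ∂h/∂ρ(θ, u, 0) = 0 for all (θ, u). Define F(θ, u, ε, ρ) = a(θ, u) + ε·b(θ, u) + ε·(ρ·c(θ, u) + h(θ, u, ρ)). Assume a(θ₀, u₀) = 0 and that the p×p Jacobian ∇_θa(θ₀, u₀) is invertible, and let G : ℝ^d × ℝ × ℝ → ℝ^p be twice continuously differentiable on a neighborhood of (u₀, 0, 0) with G(u₀, 0, 0) = θ₀ and F(G(u, ε, ρ), u, ε, ρ) = 0 there. Then there exist a neighborhood N of (u₀, 0, 0) and a constant C > 0 such that ‖∂²G/∂ρ²(u, ε, ρ)‖ ≤ C·(|ε| + |ρ|) for all (u, ε, ρ) ∈ N. -/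
/-!
Fix `(u, ε)` and put `g ρ = G(u, ε, ρ)` and `K = b + ρ • c + h`, so that
`a(g ρ, u) + ε • K(g ρ, u, ρ) = 0` near the base point. Differentiating once and twice in `ρ`
expresses `∂_θ a · g'` and `∂_θ a · g''` through terms carrying a factor `ε`, apart from the
quadratic term `∂²a(g', g')`. Near the base point `∂_θ a` is uniformly invertible,
`‖(∂_θ a)⁻¹‖ ≤ M`, and the second derivatives of `a` and the first two of `K` are bounded by `L`;
with `k = M L` this gives `‖g'‖ ≤ k |ε| (‖g'‖ + 1)` and
`‖g''‖ ≤ k ‖g'‖² + k |ε| ((‖g'‖ + 1)² + ‖g''‖)`. Once `k |ε| ≤ 1/2` the first bound yields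
`‖g'‖ = O(ε)`, and the second then yields `‖g''‖ = O(ε)`.
-/

open Filter Topology ContinuousLinearMap

theorem isUnit_fderiv_of_isUnit_det_jacobian {𝕜 n : Type*} [NontriviallyNormedField 𝕜]
    [CompleteSpace 𝕜] [Fintype n] [DecidableEq n] {f : (n → 𝕜) → n → 𝕜} {x : n → 𝕜}
    (hf : DifferentiableAt 𝕜 f x) {J : Matrix n n 𝕜}
    (hJ : ∀ i j, J i j = fderiv 𝕜 (fun y => f y i) x (Pi.single j 1)) (hdet : IsUnit J.det) :
    IsUnit (fderiv 𝕜 f x) := by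
  have hJf : LinearMap.toMatrix' (fderiv 𝕜 f x : (n → 𝕜) →ₗ[𝕜] n → 𝕜) = J := by
    ext i j
    rw [LinearMap.toMatrix'_apply, hJ, fderiv_apply hf]
    rfl
  rw [isUnit_iff_isUnit_toLinearMap,
    ← Matrix.toLin'_toMatrix' (fderiv 𝕜 f x : (n → 𝕜) →ₗ[𝕜] n → 𝕜), hJf,
    Matrix.isUnit_toLin'_iff, Matrix.isUnit_iff_isUnit_det]
  exact hdet

theorem ContinuousAt.exists_pos_eventually_norm_le_mul_norm_apply
    {𝕜 X E : Type*} [NontriviallyNormedField 𝕜] [TopologicalSpace X]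
    [NormedAddCommGroup E] [NormedSpace 𝕜 E] [CompleteSpace E]
    {T : X → E →L[𝕜] E} {x₀ : X} (hT : ContinuousAt T x₀) (hx₀ : IsUnit (T x₀)) :
    ∃ M > 0, ∀ᶠ x in 𝓝 x₀, ∀ v, ‖v‖ ≤ M * ‖T x v‖ := by
  obtain ⟨u, hu⟩ := hx₀
  have hinv : ContinuousAt (fun x => Ring.inverse (T x)) x₀ :=
    (hu ▸ NormedRing.inverse_continuousAt u).comp hT
  refine ⟨‖Ring.inverse (T x₀)‖ + 1, by positivity, ?_⟩
  filter_upwards [hT.eventually_mem (Units.isOpen.mem_nhds ⟨u, hu⟩),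
    hinv.norm.eventually_lt continuousAt_const (lt_add_one _)] with x hunit hlt v
  calc ‖v‖ = ‖Ring.inverse (T x) (T x v)‖ := by
        rw [← mul_apply_eq_comp, Ring.inverse_mul_cancel _ hunit, one_apply_eq_self]
    _ ≤ ‖Ring.inverse (T x)‖ * ‖T x v‖ := le_opNorm _ _
    _ ≤ (‖Ring.inverse (T x₀)‖ + 1) * ‖T x v‖ := by gcongr

section Curves

variable {E X Y : Type*} [NormedAddCommGroup E] [NormedSpace ℝ E]
  [NormedAddCommGroup X] [NormedSpace ℝ X] [NormedAddCommGroup Y] [NormedSpace ℝ Y]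

theorem HasDerivAt.eq_zero_of_eventuallyEq_zero {f : ℝ → E} {f' : E} {t : ℝ}
    (hf : HasDerivAt f f' t) (h : f =ᶠ[𝓝 t] 0) : f' = 0 :=
  hf.unique ((hasDerivAt_const t (0 : E)).congr_of_eventuallyEq h)

theorem ContDiff.hasDerivAt_fderiv_apply {f : X → E} (hf : ContDiff ℝ 2 f) {γ γ' : ℝ → X}
    {γ'' : X} {t : ℝ} (hγ : HasDerivAt γ (γ' t) t) (hγ' : HasDerivAt γ' γ'' t) :
    HasDerivAt (fun s => fderiv ℝ f (γ s) (γ' s))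
      (fderiv ℝ (fderiv ℝ f) (γ t) (γ' t) (γ' t) + fderiv ℝ f (γ t) γ'') t :=
  ((((hf.fderiv_right (m := 1) (by norm_num)).differentiable one_ne_zero)
    (γ t)).hasFDerivAt.comp_hasDerivAt t hγ).clm_apply hγ'

theorem fderiv_identities_of_eventually_eq_zero {f : X → E} {k : Y → E}
    (hf : ContDiff ℝ 2 f) (hk : ContDiff ℝ 2 k) {γ γ' : ℝ → X} {γ'' : X}
    {δ δ' : ℝ → Y} {δ'' : Y} {ε t : ℝ}
    (hγ : ∀ᶠ s in 𝓝 t, HasDerivAt γ (γ' s) s) (hγ' : HasDerivAt γ' γ'' t)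
    (hδ : ∀ᶠ s in 𝓝 t, HasDerivAt δ (δ' s) s) (hδ' : HasDerivAt δ' δ'' t)
    (heq : ∀ᶠ s in 𝓝 t, f (γ s) + ε • k (δ s) = 0) :
    fderiv ℝ f (γ t) (γ' t) + ε • fderiv ℝ k (δ t) (δ' t) = 0 ∧
      fderiv ℝ (fderiv ℝ f) (γ t) (γ' t) (γ' t) + fderiv ℝ f (γ t) γ'' +
        ε • (fderiv ℝ (fderiv ℝ k) (δ t) (δ' t) (δ' t) + fderiv ℝ k (δ t) δ'') = 0 := by
  have hderiv : ∀ᶠ s in 𝓝 t,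
      fderiv ℝ f (γ s) (γ' s) + ε • fderiv ℝ k (δ s) (δ' s) = 0 := by
    filter_upwards [hγ, hδ, heq.eventually_nhds] with s hγs hδs heqs
    refine HasDerivAt.eq_zero_of_eventuallyEq_zero (f := fun s => f (γ s) + ε • k (δ s)) ?_ heqs
    exact ((hf.differentiable two_ne_zero _).hasFDerivAt.comp_hasDerivAt s hγs).add
      (((hk.differentiable two_ne_zero _).hasFDerivAt.comp_hasDerivAt s hδs).const_smul ε)
  refine ⟨hderiv.self_of_nhds, HasDerivAt.eq_zero_of_eventuallyEq_zero ?_ hderiv⟩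
  exact (hf.hasDerivAt_fderiv_apply hγ.self_of_nhds hγ').add
    ((hk.hasDerivAt_fderiv_apply hδ.self_of_nhds hδ').const_smul ε)

end Curves

theorem ContinuousLinearMap.norm_apply_apply_le_of_le {E X : Type*} [NormedAddCommGroup E]
    [NormedSpace ℝ E] [NormedAddCommGroup X] [NormedSpace ℝ X] {B : X →L[ℝ] X →L[ℝ] E} {x : X}
    {L r : ℝ} (hB : ‖B‖ ≤ L) (hx : ‖x‖ ≤ r) : ‖B x x‖ ≤ L * r ^ 2 := by
  have hL : 0 ≤ L := (norm_nonneg B).trans hB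
  have hr : 0 ≤ r := (norm_nonneg x).trans hx
  calc ‖B x x‖ ≤ ‖B‖ * ‖x‖ * ‖x‖ := le_opNorm₂ B x x
    _ ≤ L * r * r := by gcongr
    _ = L * r ^ 2 := by ring

theorem bootstrap_le {k e X Y : ℝ} (hk : 0 ≤ k) (he : 0 ≤ e) (hX0 : 0 ≤ X)
    (hsmall : k * e ≤ 1 / 2) (hX : X ≤ k * e * (X + 1))
    (hY : Y ≤ k * X ^ 2 + k * e * ((X + 1) ^ 2 + Y)) :
    Y ≤ (8 * k + 4 * k ^ 2) * e := by
  have hke : 0 ≤ k * e := mul_nonneg hk he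
  have hX1 : X ≤ 1 := by nlinarith
  have hXe : X ≤ 2 * (k * e) := by nlinarith
  have hXsq : k * X ^ 2 ≤ 2 * k ^ 2 * e := by
    have : X ^ 2 ≤ 2 * (k * e) := by nlinarith
    nlinarith [mul_le_mul_of_nonneg_left this hk]
  have hsq : k * e * (X + 1) ^ 2 ≤ 4 * (k * e) := by nlinarith
  rcases le_or_gt 0 Y with hY0 | hY0
  · nlinarith [mul_le_mul_of_nonneg_right hsmall hY0]
  · nlinarith

section Implicit

variable {E U : Type*} [NormedAddCommGroup E] [NormedSpace ℝ E]
  [NormedAddCommGroup U] [NormedSpace ℝ U] {A : E × U → E} {K : E × U × ℝ → E}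

theorem norm_deriv_deriv_le_of_implicit (hA : ContDiff ℝ 2 A) (hK : ContDiff ℝ 2 K)
    {g : ℝ → E} {u : U} {ε ρ M L : ℝ} (hg : ContDiffAt ℝ 2 g ρ)
    (heq : ∀ᶠ s in 𝓝 ρ, A (g s, u) + ε • K (g s, u, s) = 0)
    (hM : 0 ≤ M) (hL : 0 ≤ L) (hcoer : ∀ v, ‖v‖ ≤ M * ‖fderiv ℝ A (g ρ, u) (v, 0)‖)
    (hA2 : ‖fderiv ℝ (fderiv ℝ A) (g ρ, u)‖ ≤ L) (hK1 : ‖fderiv ℝ K (g ρ, u, ρ)‖ ≤ L)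
    (hK2 : ‖fderiv ℝ (fderiv ℝ K) (g ρ, u, ρ)‖ ≤ L) (hsmall : M * L * |ε| ≤ 1 / 2) :
    ‖deriv (deriv g) ρ‖ ≤ (8 * (M * L) + 4 * (M * L) ^ 2) * |ε| := by
  have hg1 : ∀ᶠ s in 𝓝 ρ, HasDerivAt g (deriv g s) s :=
    (hg.eventually (by simp)).mono fun s hs => (hs.differentiableAt two_ne_zero).hasDerivAt
  have hg2 : HasDerivAt (deriv g) (deriv (deriv g) ρ) ρ :=
    (((hg.fderiv_right (m := 1) (by norm_num)).differentiableAt one_ne_zero).clm_apply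
      (differentiableAt_const (1 : ℝ))).hasDerivAt
  obtain ⟨h1, h2⟩ := fderiv_identities_of_eventually_eq_zero hA hK
    (γ := fun s => (g s, u)) (γ' := fun s => (deriv g s, 0))
    (δ := fun s => (g s, u, s)) (δ' := fun s => (deriv g s, 0, 1))
    (hg1.mono fun s hs => hs.prodMk (hasDerivAt_const s u)) (hg2.prodMk (hasDerivAt_const ρ 0))
    (hg1.mono fun s hs => hs.prodMk ((hasDerivAt_const s u).prodMk (hasDerivAt_id s)))
    (hg2.prodMk (hasDerivAt_const ρ (0, 1))) heq
  set X := ‖deriv g ρ‖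
  set Y := ‖deriv (deriv g) ρ‖
  have hX0 : 0 ≤ X := norm_nonneg _
  have hv : ‖((deriv g ρ, 0) : E × U)‖ ≤ X :=
    norm_prod_le_iff.2 ⟨le_rfl, by rw [norm_zero]; exact hX0⟩
  have hw : ‖((deriv g ρ, 0, 1) : E × U × ℝ)‖ ≤ X + 1 :=
    norm_prod_le_iff.2 ⟨by linarith,
      norm_prod_le_iff.2 ⟨by rw [norm_zero]; linarith, by rw [norm_one]; linarith⟩⟩
  have hw' : ‖((deriv (deriv g) ρ, 0) : E × U × ℝ)‖ ≤ Y :=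
    norm_prod_le_iff.2 ⟨le_rfl, by rw [norm_zero]; exact norm_nonneg _⟩
  have hX : X ≤ M * L * |ε| * (X + 1) := calc
    X ≤ M * ‖fderiv ℝ A (g ρ, u) (deriv g ρ, 0)‖ := hcoer _
    _ = M * (|ε| * ‖fderiv ℝ K (g ρ, u, ρ) (deriv g ρ, 0, 1)‖) := by
      rw [eq_neg_of_add_eq_zero_left h1, norm_neg, norm_smul, Real.norm_eq_abs]
    _ ≤ M * (|ε| * (L * (X + 1))) := by gcongr; exact le_of_opNorm_le_of_le _ hK1 hw
    _ = M * L * |ε| * (X + 1) := by ring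
  have h2' : fderiv ℝ A (g ρ, u) (deriv (deriv g) ρ, 0) =
      -(fderiv ℝ (fderiv ℝ A) (g ρ, u) (deriv g ρ, 0) (deriv g ρ, 0) +
        ε • (fderiv ℝ (fderiv ℝ K) (g ρ, u, ρ) (deriv g ρ, 0, 1) (deriv g ρ, 0, 1) +
          fderiv ℝ K (g ρ, u, ρ) (deriv (deriv g) ρ, 0))) := by
    rw [eq_neg_iff_add_eq_zero]
    convert h2 using 1
    abel
  have hY : Y ≤ M * L * X ^ 2 + M * L * |ε| * ((X + 1) ^ 2 + Y) := calc
    Y ≤ M * ‖fderiv ℝ A (g ρ, u) (deriv (deriv g) ρ, 0)‖ := hcoer _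
    _ ≤ M * (L * X ^ 2 + |ε| * (L * (X + 1) ^ 2 + L * Y)) := by
      rw [h2', norm_neg]
      gcongr
      refine (norm_add_le _ _).trans (add_le_add (norm_apply_apply_le_of_le hA2 hv) ?_)
      rw [norm_smul, Real.norm_eq_abs]
      gcongr
      exact (norm_add_le _ _).trans (add_le_add (norm_apply_apply_le_of_le hK2 hw)
        (le_of_opNorm_le_of_le _ hK1 hw'))
    _ = M * L * X ^ 2 + M * L * |ε| * ((X + 1) ^ 2 + Y) := by ring
  exact bootstrap_le (mul_nonneg hM hL) (abs_nonneg ε) hX0 hsmall hX hY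

end Implicit

theorem exists_eventually_bounds_fderiv {E U P : Type*} [NormedAddCommGroup E]
    [NormedSpace ℝ E] [CompleteSpace E] [NormedAddCommGroup U] [NormedSpace ℝ U]
    [TopologicalSpace P] {A : E × U → E} {K : E × U × ℝ → E} (hA : ContDiff ℝ 2 A)
    (hK : ContDiff ℝ 2 K) {x : P → E × U} {y : P → E × U × ℝ} {q₀ : P}
    (hx : ContinuousAt x q₀) (hy : ContinuousAt y q₀)
    (hunit : IsUnit (fderiv ℝ A (x q₀) ∘L inl ℝ E U)) :
    ∃ M > 0, ∃ L > 0, ∀ᶠ q in 𝓝 q₀, (∀ v, ‖v‖ ≤ M * ‖fderiv ℝ A (x q) (v, 0)‖) ∧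
      ‖fderiv ℝ (fderiv ℝ A) (x q)‖ ≤ L ∧ ‖fderiv ℝ K (y q)‖ ≤ L ∧
      ‖fderiv ℝ (fderiv ℝ K) (y q)‖ ≤ L := by
  obtain ⟨M, hM, hMev⟩ := ContinuousAt.exists_pos_eventually_norm_le_mul_norm_apply
    (T := fun q => fderiv ℝ A (x q) ∘L inl ℝ E U)
    (((hA.continuous_fderiv two_ne_zero).continuousAt.comp hx).clm_comp continuousAt_const) hunit
  set W := fun q => ‖fderiv ℝ (fderiv ℝ A) (x q)‖ + ‖fderiv ℝ K (y q)‖ +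
    ‖fderiv ℝ (fderiv ℝ K) (y q)‖
  have hW : ContinuousAt W q₀ :=
    ((((hA.fderiv_right (m := 1) (by norm_num)).continuous_fderiv one_ne_zero).continuousAt.comp
      hx).norm.add ((hK.continuous_fderiv two_ne_zero).continuousAt.comp hy).norm).add
      (((hK.fderiv_right (m := 1) (by norm_num)).continuous_fderiv one_ne_zero).continuousAt.comp
        hy).norm
  refine ⟨M, hM, W q₀ + 1, by positivity, ?_⟩
  filter_upwards [hMev, hW.eventually_lt continuousAt_const (lt_add_one _)] with q hcoer hWq
  have hA2 := norm_nonneg (fderiv ℝ (fderiv ℝ A) (x q))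
  have hK1 := norm_nonneg (fderiv ℝ K (y q))
  have hK2 := norm_nonneg (fderiv ℝ (fderiv ℝ K) (y q))
  exact ⟨hcoer, by linarith, by linarith, by linarith⟩

theorem eventually_norm_deriv_deriv_le_mul_abs {E U : Type*} [NormedAddCommGroup E]
    [NormedSpace ℝ E] [CompleteSpace E] [NormedAddCommGroup U] [NormedSpace ℝ U]
    {A : E × U → E} {K : E × U × ℝ → E} (hA : ContDiff ℝ 2 A) (hK : ContDiff ℝ 2 K)
    {G : U → ℝ → ℝ → E} {V : Set (U × ℝ × ℝ)} (hV : IsOpen V) {u₀ : U} {ρ₀ : ℝ}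
    (h₀ : (u₀, 0, ρ₀) ∈ V) (hG : ContDiffOn ℝ 2 (fun q : U × ℝ × ℝ => G q.1 q.2.1 q.2.2) V)
    (hGeq : ∀ q ∈ V, A (G q.1 q.2.1 q.2.2, q.1) + q.2.1 • K (G q.1 q.2.1 q.2.2, q.1, q.2.2) = 0)
    (hunit : IsUnit (fderiv ℝ A (G u₀ 0 ρ₀, u₀) ∘L inl ℝ E U)) :
    ∃ C > 0, ∀ᶠ q in 𝓝 (u₀, 0, ρ₀),
      ‖deriv (deriv (fun ρ => G q.1 q.2.1 ρ)) q.2.2‖ ≤ C * |q.2.1| := by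
  set Gq := fun q : U × ℝ × ℝ => G q.1 q.2.1 q.2.2
  have hGc : ContinuousAt Gq (u₀, 0, ρ₀) := hG.continuousOn.continuousAt (hV.mem_nhds h₀)
  obtain ⟨M, hM, L, hL, hbounds⟩ := exists_eventually_bounds_fderiv hA hK
    (hGc.prodMk continuousAt_fst) (hGc.prodMk (continuousAt_fst.prodMk continuousAt_snd.snd))
    hunit
  have hsmall : ∀ᶠ q in 𝓝 (u₀, 0, ρ₀), M * L * |q.2.1| < 1 / 2 :=
    (continuousAt_const.mul continuousAt_snd.fst.abs).eventually_lt continuousAt_const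
      (by norm_num)
  refine ⟨8 * (M * L) + 4 * (M * L) ^ 2, by positivity, ?_⟩
  filter_upwards [hV.mem_nhds h₀, hbounds, hsmall] with ⟨u, ε, ρ⟩ hq ⟨hcoer, hA2, hK1, hK2⟩ hεq
  have hcurve : ContDiff ℝ 2 (fun s : ℝ => (u, ε, s)) :=
    contDiff_const.prodMk (contDiff_const.prodMk contDiff_id)
  have hg : ContDiffAt ℝ 2 (fun s => Gq (u, ε, s)) ρ :=
    ContDiffAt.comp (g := Gq) ρ (hG.contDiffAt (hV.mem_nhds hq)) hcurve.contDiffAt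
  have heq : ∀ᶠ s in 𝓝 ρ, A (Gq (u, ε, s), u) + ε • K (Gq (u, ε, s), u, s) = 0 := by
    filter_upwards [hcurve.continuous.continuousAt.preimage_mem_nhds (hV.mem_nhds hq)]
      with s hs using hGeq _ hs
  exact norm_deriv_deriv_le_of_implicit hA hK hg heq hM.le hL.le hcoer hA2 hK1 hK2 hεq.le

theorem stmt8_general (p d : ℕ)
    (θ₀ : Fin p → ℝ) (u₀ : Fin d → ℝ)
    (a b c : (Fin p → ℝ) → (Fin d → ℝ) → (Fin p → ℝ))
    (ha : ContDiff ℝ 2 (fun q : (Fin p → ℝ) × (Fin d → ℝ) => a q.1 q.2))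
    (hb : ContDiff ℝ 2 (fun q : (Fin p → ℝ) × (Fin d → ℝ) => b q.1 q.2))
    (hc : ContDiff ℝ 2 (fun q : (Fin p → ℝ) × (Fin d → ℝ) => c q.1 q.2))
    (h : (Fin p → ℝ) → (Fin d → ℝ) → ℝ → (Fin p → ℝ))
    (hh : ContDiff ℝ 2 (fun q : (Fin p → ℝ) × (Fin d → ℝ) × ℝ => h q.1 q.2.1 q.2.2))
    (F : (Fin p → ℝ) → (Fin d → ℝ) → ℝ → ℝ → (Fin p → ℝ))
    (hF : ∀ θ u ε ρ, F θ u ε ρ = a θ u + ε • b θ u + ε • (ρ • c θ u + h θ u ρ))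
    (Ja : Matrix (Fin p) (Fin p) ℝ)
    (hJa : ∀ i j, Ja i j = fderiv ℝ (fun θ => a θ u₀ i) θ₀ (Pi.single j 1))
    (hJaInv : IsUnit Ja.det)
    (G : (Fin d → ℝ) → ℝ → ℝ → (Fin p → ℝ))
    (V : Set ((Fin d → ℝ) × ℝ × ℝ)) (hVopen : IsOpen V)
    (hV : ((u₀, 0, 0) : (Fin d → ℝ) × ℝ × ℝ) ∈ V)
    (hG : ContDiffOn ℝ 2 (fun q : (Fin d → ℝ) × ℝ × ℝ => G q.1 q.2.1 q.2.2) V)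
    (hG0 : G u₀ 0 0 = θ₀)
    (hFG : ∀ q ∈ V, F (G q.1 q.2.1 q.2.2) q.1 q.2.1 q.2.2 = 0) :
    ∃ N ∈ nhds ((u₀, 0, 0) : (Fin d → ℝ) × ℝ × ℝ), ∃ C > (0:ℝ),
      ∀ q ∈ N,
        ‖deriv (fun s => deriv (fun ρ => G q.1 q.2.1 ρ) s) q.2.2‖
          ≤ C * (|q.2.1| + |q.2.2|) := by
  have hK : ContDiff ℝ 2 fun y : (Fin p → ℝ) × (Fin d → ℝ) × ℝ =>
      b y.1 y.2.1 + (y.2.2 • c y.1 y.2.1 + h y.1 y.2.1 y.2.2) :=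
    (hb.comp (contDiff_fst.prodMk contDiff_snd.fst)).add
      ((contDiff_snd.snd.smul (hc.comp (contDiff_fst.prodMk contDiff_snd.fst))).add hh)
  have hpartial : HasFDerivAt (fun θ => a θ u₀)
      (fderiv ℝ (fun q : (Fin p → ℝ) × (Fin d → ℝ) => a q.1 q.2) (θ₀, u₀) ∘L
        inl ℝ (Fin p → ℝ) (Fin d → ℝ)) θ₀ :=
    (ha.differentiable two_ne_zero _).hasFDerivAt.comp θ₀ (hasFDerivAt_prodMk_left θ₀ u₀)
  obtain ⟨C, hC, hev⟩ := eventually_norm_deriv_deriv_le_mul_abs ha hK hVopen hV hG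
    (fun q hq => by simpa only [hF, smul_add, add_assoc] using hFG q hq)
    (by
      rw [hG0, ← hpartial.fderiv]
      exact isUnit_fderiv_of_isUnit_det_jacobian hpartial.differentiableAt hJa hJaInv)
  exact ⟨_, hev, C, hC, fun q hq =>
    hq.trans (mul_le_mul_of_nonneg_left (le_add_of_nonneg_right (abs_nonneg _)) hC.le)⟩

/-- near `(u₀,0,0)` the second `ρ`-derivative of the implicit
solution `G` is `O(|ε| + |ρ|)`. -/
theorem stmt8 (p d : ℕ) (hp : 0 < p) (hd : 0 < d)
    (θ₀ : Fin p → ℝ) (u₀ : Fin d → ℝ)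
    (a b c : (Fin p → ℝ) → (Fin d → ℝ) → (Fin p → ℝ))
    (ha : ContDiff ℝ 2 (fun q : (Fin p → ℝ) × (Fin d → ℝ) => a q.1 q.2))
    (hb : ContDiff ℝ 2 (fun q : (Fin p → ℝ) × (Fin d → ℝ) => b q.1 q.2))
    (hc : ContDiff ℝ 2 (fun q : (Fin p → ℝ) × (Fin d → ℝ) => c q.1 q.2))
    (h : (Fin p → ℝ) → (Fin d → ℝ) → ℝ → (Fin p → ℝ))
    (hh : ContDiff ℝ 2 (fun q : (Fin p → ℝ) × (Fin d → ℝ) × ℝ => h q.1 q.2.1 q.2.2))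
    (hh0 : ∀ θ u, h θ u 0 = 0)
    (hhρ : ∀ θ u, deriv (fun ρ => h θ u ρ) 0 = 0)
    (F : (Fin p → ℝ) → (Fin d → ℝ) → ℝ → ℝ → (Fin p → ℝ))
    (hF : ∀ θ u ε ρ, F θ u ε ρ = a θ u + ε • b θ u + ε • (ρ • c θ u + h θ u ρ))
    (ha0 : a θ₀ u₀ = 0)
    (Ja : Matrix (Fin p) (Fin p) ℝ)
    (hJa : ∀ i j, Ja i j = fderiv ℝ (fun θ => a θ u₀ i) θ₀ (Pi.single j 1))
    (hJaInv : IsUnit Ja.det)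
    (G : (Fin d → ℝ) → ℝ → ℝ → (Fin p → ℝ))
    (V : Set ((Fin d → ℝ) × ℝ × ℝ)) (hVopen : IsOpen V)
    (hV : ((u₀, 0, 0) : (Fin d → ℝ) × ℝ × ℝ) ∈ V)
    (hG : ContDiffOn ℝ 2 (fun q : (Fin d → ℝ) × ℝ × ℝ => G q.1 q.2.1 q.2.2) V)
    (hG0 : G u₀ 0 0 = θ₀)
    (hFG : ∀ q ∈ V, F (G q.1 q.2.1 q.2.2) q.1 q.2.1 q.2.2 = 0) :
    ∃ N ∈ nhds ((u₀, 0, 0) : (Fin d → ℝ) × ℝ × ℝ), ∃ C > (0:ℝ),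
      ∀ q ∈ N,
        ‖deriv (fun s => deriv (fun ρ => G q.1 q.2.1 ρ) s) q.2.2‖
          ≤ C * (|q.2.1| + |q.2.2|) :=
  stmt8_general p d θ₀ u₀ a b c ha hb hc h hh F hF Ja hJa hJaInv G V hVopen hV hG hG0 hFG
end

section
/- Let p, d be positive integers, (θ₀, u₀) ∈ ℝ^p × ℝ^d. Let a, b, c : ℝ^p × ℝ^d → ℝ^p be twice continuously differentiable, and let h : ℝ^p × ℝ^d × ℝ → ℝ^p be twice continuously differentiable with h(θ, u, 0) = 0 and ∂h/∂ρ(θ, u, 0) = 0 for all (θ, u). Define F(θ, u, ε, ρ) = a(θ, u) + ε·b(θ, u) + ε·(ρ·c(θ, u) + h(θ, u, ρ)). Assume a(θ₀, u₀) = 0 and ∇_θa(θ₀, u₀) invertible, and let G be twice continuously differentiable on a neighborhood of (u₀, 0, 0) with G(u₀, 0, 0) = θ₀ and F(G(u, ε, ρ), u, ε, ρ) = 0 there. For a sequence u_n → u₀ in ℝ^d, define the true discrepancy δ_n = G(u_n, 1/n, 1/n) − G(u_n, 1/n, 0) and the approximated discrepancy δ̂_n = (1/n)·∂G/∂ρ(u_n,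 1/n, 0). Then there exists C > 0 such that for all sufficiently large n, ‖δ_n − δ̂_n‖ ≤ C·n⁻³. -/
/-!
Write `q = (u, ε, ρ)` and `W = ∂G/∂ρ`. Differentiating `F(G(q), q) = 0` in `ρ` gives
`∂_θF(G(q), q) W(q) = -ε (c + ∂_ρh)(G(q), u, ρ)`, and near the base point `∂_θF` is uniformly
invertible. Hence `W = O(ε)`, and comparing the identity at `(u, ε, s)` and `(u, ε, 0)`, using that
`∂_θF` and `c + ∂_ρh` are Lipschitz along the solution, gives `W(u, ε, s) - W(u, ε, 0) = O(ε s)`.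
By the mean value inequality applied to `s ↦ G(u, ε, s) - s W(u, ε, 0)` on `[0, ε]`,
`δ - δ̂ = O(ε³)`, and `ε = 1/n`.
-/

open Filter Topology Set
open scoped NNReal

section Operators

variable {𝕜 E F : Type*} [NontriviallyNormedField 𝕜] [NormedAddCommGroup E] [NormedSpace 𝕜 E]
  [NormedAddCommGroup F] [NormedSpace 𝕜 F]

theorem ContinuousAt.exists_forall_norm_le_mul_norm_apply [CompleteSpace E] {X : Type*}
    [TopologicalSpace X] {M : X → E →L[𝕜] E} {x₀ : X} (hM : ContinuousAt M x₀)
    (hM₀ : IsUnit (M x₀)) : ∃ K, 0 ≤ K ∧ ∀ᶠ x in 𝓝 x₀, ∀ v, ‖v‖ ≤ K * ‖M x v‖ := by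
  obtain ⟨u, hu⟩ := hM₀
  have hinv : ContinuousAt (fun x => Ring.inverse (M x)) x₀ :=
    (NormedRing.inverse_continuousAt u).comp_of_eq hM hu.symm
  refine ⟨‖Ring.inverse (M x₀)‖ + 1, by positivity, ?_⟩
  filter_upwards [hM.eventually (Units.isOpen.mem_nhds ⟨u, hu⟩),
    hinv.norm.eventually (eventually_le_nhds (lt_add_one _))] with x hunit hle v
  calc ‖v‖ = ‖Ring.inverse (M x) (M x v)‖ := by
        rw [← mul_apply_eq_comp, Ring.inverse_mul_cancel _ hunit, one_apply_eq_self]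
    _ ≤ ‖Ring.inverse (M x)‖ * ‖M x v‖ := ContinuousLinearMap.le_opNorm _ _
    _ ≤ _ := by gcongr

theorem norm_sub_le_of_forall_norm_le_mul_norm_apply {M₀ M₁ : E →L[𝕜] F} {K : ℝ} (hK : 0 ≤ K)
    (h₀ : ∀ x, ‖x‖ ≤ K * ‖M₀ x‖) (h₁ : ∀ x, ‖x‖ ≤ K * ‖M₁ x‖) (w₀ w₁ : E) :
    ‖w₁ - w₀‖ ≤ K * (‖M₁ w₁ - M₀ w₀‖ + ‖M₁ - M₀‖ * (K * ‖M₀ w₀‖)) := by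
  have hsplit : M₁ (w₁ - w₀) = (M₁ w₁ - M₀ w₀) - (M₁ - M₀) w₀ := by
    simp only [map_sub, sub_apply]; abel
  calc ‖w₁ - w₀‖ ≤ K * ‖M₁ (w₁ - w₀)‖ := h₁ _
    _ ≤ K * (‖M₁ w₁ - M₀ w₀‖ + ‖M₁ - M₀‖ * ‖w₀‖) := by
        rw [hsplit]
        gcongr
        exact (norm_sub_le _ _).trans (by gcongr; exact ContinuousLinearMap.le_opNorm _ _)
    _ ≤ _ := by gcongr; exact h₀ w₀

end Operators

theorem isUnit_fderiv_of_isUnit_det {ι : Type*} [Fintype ι] [DecidableEq ι]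
    {f : (ι → ℝ) → ι → ℝ} {x : ι → ℝ} (hf : DifferentiableAt ℝ f x) {J : Matrix ι ι ℝ}
    (hJ : ∀ i j, J i j = fderiv ℝ (fun y => f y i) x (Pi.single j 1)) (hdet : IsUnit J.det) :
    IsUnit (fderiv ℝ f x) := by
  have hJf : J = LinearMap.toMatrix' (fderiv ℝ f x : (ι → ℝ) →ₗ[ℝ] ι → ℝ) := by
    ext i j
    rw [hJ, fderiv_apply hf i, LinearMap.toMatrix'_apply]
    rfl
  rw [hJf, LinearMap.det_toMatrix'] at hdet
  exact ⟨((fderiv ℝ f x).toContinuousLinearEquivOfDetNeZero hdet.ne_zero).toUnit, rfl⟩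

theorem norm_sub_sub_smul_le_of_norm_deriv_sub_le {E : Type*} [NormedAddCommGroup E]
    [NormedSpace ℝ E] {f f' : ℝ → E} {ε C : ℝ} (hε : 0 ≤ ε)
    (hf : ∀ s ∈ Icc 0 ε, HasDerivAt f (f' s) s) (hf' : ∀ s ∈ Icc 0 ε, ‖f' s - f' 0‖ ≤ C) :
    ‖f ε - f 0 - ε • f' 0‖ ≤ C * ε := by
  have hg : ∀ s ∈ Icc 0 ε,
      HasDerivWithinAt (fun s => f s - s • f' 0) (f' s - f' 0) (Icc 0 ε) s := fun s hs => by
    have := (hf s hs).sub ((hasDerivAt_id' s).smul_const (f' 0))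
    rw [one_smul] at this
    exact this.hasDerivWithinAt
  have := norm_image_sub_le_of_norm_deriv_le_segment' hg
    (fun s hs => hf' s (Ico_subset_Icc_self hs)) ε ⟨hε, le_rfl⟩
  simpa [sub_right_comm] using this

theorem hasDerivAt_prodMk_prodMk_id {α β : Type*} [NormedAddCommGroup α] [NormedSpace ℝ α]
    [NormedAddCommGroup β] [NormedSpace ℝ β] (x : α) (y : β) (ρ : ℝ) :
    HasDerivAt (fun s : ℝ => (x, y, s)) ((0 : α), (0 : β), (1 : ℝ)) ρ :=
  (hasDerivAt_const ρ x).prodMk ((hasDerivAt_const ρ y).prodMk (hasDerivAt_id ρ))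

section PerturbedEquation

variable {E U : Type*} [NormedAddCommGroup E] [NormedSpace ℝ E] [NormedAddCommGroup U]
  [NormedSpace ℝ U] {A Ψ : E × U × ℝ → E} {Θ : U × ℝ × ℝ → E}

/-- The paper's `F`, with `A(θ, u, ε) = a + ε b` and `Ψ(θ, u, ρ) = ρ c + h`. -/
def perturbedMap (A Ψ : E × U × ℝ → E) (z : E × U × ℝ × ℝ) : E :=
  A (z.1, z.2.1, z.2.2.1) + z.2.2.1 • Ψ (z.1, z.2.1, z.2.2.2)

noncomputable def thetaJacobian (A Ψ : E × U × ℝ → E) (Θ : U × ℝ × ℝ → E) (q : U × ℝ × ℝ) :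
    E →L[ℝ] E :=
  (fderiv ℝ (perturbedMap A Ψ) (Θ q, q)).comp (.inl ℝ E (U × ℝ × ℝ))

/-- `∂Ψ/∂ρ` along the solution `Θ`, so that `∂F/∂ρ = ε • rhoSlope` there. -/
noncomputable def rhoSlope (Ψ : E × U × ℝ → E) (Θ : U × ℝ × ℝ → E) (q : U × ℝ × ℝ) : E :=
  fderiv ℝ Ψ (Θ q, q.1, q.2.2) (0, 0, 1)

theorem contDiff_perturbedMap {n : WithTop ℕ∞} (hA : ContDiff ℝ n A) (hΨ : ContDiff ℝ n Ψ) :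
    ContDiff ℝ n (perturbedMap A Ψ) := by
  unfold perturbedMap
  fun_prop

theorem hasDerivAt_perturbedMap_rho {θ : E} {u : U} {ρ : ℝ} (hΨ : DifferentiableAt ℝ Ψ (θ, u, ρ))
    (ε : ℝ) :
    HasDerivAt (fun s => perturbedMap A Ψ (θ, u, ε, s)) (ε • fderiv ℝ Ψ (θ, u, ρ) (0, 0, 1)) ρ := by
  have := (hasDerivAt_const ρ (A (θ, u, ε))).add
    ((hΨ.hasFDerivAt.comp_hasDerivAt ρ (hasDerivAt_prodMk_prodMk_id θ u ρ)).const_smul ε)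
  rwa [zero_add] at this

theorem thetaJacobian_apply_fderiv_eq {u : U} {ε ρ : ℝ}
    (hF : DifferentiableAt ℝ (perturbedMap A Ψ) (Θ (u, ε, ρ), u, ε, ρ))
    (hΨ : DifferentiableAt ℝ Ψ (Θ (u, ε, ρ), u, ρ)) (hΘ : DifferentiableAt ℝ Θ (u, ε, ρ))
    (hzero : ∀ᶠ q in 𝓝 (u, ε, ρ), perturbedMap A Ψ (Θ q, q) = 0) :
    thetaJacobian A Ψ Θ (u, ε, ρ) (fderiv ℝ Θ (u, ε, ρ) (0, 0, 1)) =
      -(ε • rhoSlope Ψ Θ (u, ε, ρ)) := by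
  set L := fderiv ℝ (perturbedMap A Ψ) (Θ (u, ε, ρ), u, ε, ρ)
  set w := fderiv ℝ Θ (u, ε, ρ) (0, 0, 1)
  have hline := hasDerivAt_prodMk_prodMk_id u ε ρ
  have hsol : L (w, 0, 0, 1) = 0 := by
    have hcomp := hF.hasFDerivAt.comp_hasDerivAt ρ
      ((hΘ.hasFDerivAt.comp_hasDerivAt ρ hline).prodMk hline)
    have hconst : (fun s => perturbedMap A Ψ (Θ (u, ε, s), u, ε, s)) =ᶠ[𝓝 ρ] fun _ => 0 :=
      (hline.continuousAt.eventually hzero :)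
    exact (hcomp.congr_of_eventuallyEq hconst.symm).unique (hasDerivAt_const ρ 0)
  have hrho : L (0, 0, 0, 1) = ε • rhoSlope Ψ Θ (u, ε, ρ) := by
    have hcomp := hF.hasFDerivAt.comp_hasDerivAt ρ ((hasDerivAt_const ρ (Θ (u, ε, ρ))).prodMk hline)
    exact hcomp.unique (hasDerivAt_perturbedMap_rho hΨ ε)
  have hsplit : ((w, 0, 0, 1) : E × U × ℝ × ℝ) = (w, 0) + (0, 0, 0, 1) := by simp
  rw [hsplit, map_add, hrho] at hsol
  exact eq_neg_of_add_eq_zero_left hsol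

theorem thetaJacobian_eq_fderiv {u₀ : U}
    (hF : DifferentiableAt ℝ (perturbedMap A Ψ) (Θ (u₀, 0, 0), u₀, 0, 0)) :
    thetaJacobian A Ψ Θ (u₀, 0, 0) = fderiv ℝ (fun θ => A (θ, u₀, 0)) (Θ (u₀, 0, 0)) := by
  have hA : (fun θ => A (θ, u₀, 0)) = fun θ => perturbedMap A Ψ (θ, u₀, 0, 0) := by
    simp [perturbedMap]
  rw [hA]
  have hslice := hasFDerivAt_prodMk_left (𝕜 := ℝ) (Θ (u₀, 0, 0)) ((u₀, 0, 0) : U × ℝ × ℝ)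
  exact (hF.hasFDerivAt.comp (Θ (u₀, 0, 0)) hslice).fderiv.symm

theorem ContDiffAt.thetaJacobian {q : U × ℝ × ℝ} (hA : ContDiff ℝ 2 A) (hΨ : ContDiff ℝ 2 Ψ)
    (hΘ : ContDiffAt ℝ 2 Θ q) : ContDiffAt ℝ 1 (thetaJacobian A Ψ Θ) q :=
  (((contDiff_perturbedMap hA hΨ).fderiv_right le_rfl).contDiffAt.comp q
    ((hΘ.of_le one_le_two).prodMk contDiffAt_id)).clm_comp contDiffAt_const

theorem ContDiffAt.rhoSlope {q : U × ℝ × ℝ} (hΨ : ContDiff ℝ 2 Ψ) (hΘ : ContDiffAt ℝ 2 Θ q) :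
    ContDiffAt ℝ 1 (rhoSlope Ψ Θ) q :=
  ((hΨ.fderiv_right le_rfl).contDiffAt.comp q ((hΘ.of_le one_le_two).prodMk
    (contDiffAt_fst.prodMk (contDiffAt_snd.comp q contDiffAt_snd)))).clm_apply contDiffAt_const

end PerturbedEquation

theorem eventually_forall_mem_Icc_mem {U : Type*} [PseudoMetricSpace U] {u₀ : U}
    {N : Set (U × ℝ × ℝ)} (hN : N ∈ 𝓝 (u₀, 0, 0)) :
    ∀ᶠ x : U × ℝ in 𝓝 (u₀, 0), ∀ s ∈ Icc 0 x.2, (x.1, x.2, s) ∈ N := by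
  obtain ⟨r, hr, hball⟩ := Metric.mem_nhds_iff.1 hN
  filter_upwards [Metric.ball_mem_nhds (u₀, (0 : ℝ)) hr] with x hx s hs
  apply hball
  simp only [Metric.mem_ball, Prod.dist_eq, max_lt_iff] at hx ⊢
  refine ⟨hx.1, hx.2, lt_of_le_of_lt ?_ hx.2⟩
  rw [Real.dist_eq, Real.dist_eq, sub_zero, sub_zero, abs_of_nonneg hs.1,
    abs_of_nonneg (hs.1.trans hs.2)]
  exact hs.2

theorem norm_sub_le_mul_of_lipschitzOnWith {U E : Type*} [NormedAddCommGroup U]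
    [NormedAddCommGroup E] [NormedSpace ℝ E] {M : U × ℝ × ℝ → E →L[ℝ] E}
    {W v : U × ℝ × ℝ → E} {N : Set (U × ℝ × ℝ)} {K B : ℝ} {LM Lv : ℝ≥0} (hK : 0 ≤ K)
    (hinv : ∀ q ∈ N, ∀ x, ‖x‖ ≤ K * ‖M q x‖) (hB : ∀ q ∈ N, ‖v q‖ ≤ B)
    (hLM : LipschitzOnWith LM M N) (hLv : LipschitzOnWith Lv v N)
    (hW : ∀ q ∈ N, M q (W q) = -(q.2.1 • v q)) {u : U} {ε s : ℝ} (hε : 0 ≤ ε) (hs : 0 ≤ s)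
    (h₀ : (u, ε, 0) ∈ N) (h₁ : (u, ε, s) ∈ N) :
    ‖W (u, ε, s) - W (u, ε, 0)‖ ≤ K * (Lv + LM * K * B) * (ε * s) := by
  have hdist : ‖((u, ε, s) : U × ℝ × ℝ) - (u, ε, 0)‖ = s := by
    simp [Prod.norm_def, abs_of_nonneg hs, hs]
  have hv := hLv.norm_sub_le h₁ h₀
  have hM := hLM.norm_sub_le h₁ h₀
  rw [hdist] at hv hM
  calc ‖W (u, ε, s) - W (u, ε, 0)‖
      ≤ K * (‖M (u, ε, s) (W (u, ε, s)) - M (u, ε, 0) (W (u, ε, 0))‖ +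
          ‖M (u, ε, s) - M (u, ε, 0)‖ * (K * ‖M (u, ε, 0) (W (u, ε, 0))‖)) :=
        norm_sub_le_of_forall_norm_le_mul_norm_apply hK (hinv _ h₀) (hinv _ h₁) _ _
    _ = K * (ε * ‖v (u, ε, s) - v (u, ε, 0)‖ +
          ‖M (u, ε, s) - M (u, ε, 0)‖ * (K * (ε * ‖v (u, ε, 0)‖))) := by
        rw [hW _ h₁, hW _ h₀, neg_sub_neg, ← smul_sub, norm_smul, norm_neg, norm_smul,
          Real.norm_of_nonneg hε, norm_sub_rev (v _)]
    _ ≤ K * (ε * (Lv * s) + LM * s * (K * (ε * B))) := by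
        gcongr
        exact hB _ h₀
    _ = K * (Lv + LM * K * B) * (ε * s) := by ring

theorem exists_norm_sub_sub_smul_deriv_le {E U : Type*} [NormedAddCommGroup E]
    [NormedSpace ℝ E] [CompleteSpace E] [NormedAddCommGroup U] [NormedSpace ℝ U]
    {A Ψ : E × U × ℝ → E} {Θ : U × ℝ × ℝ → E} {u₀ : U} (hA : ContDiff ℝ 2 A)
    (hΨ : ContDiff ℝ 2 Ψ) (hΘ : ContDiffAt ℝ 2 Θ (u₀, 0, 0))
    (hzero : ∀ᶠ q in 𝓝 (u₀, 0, 0), perturbedMap A Ψ (Θ q, q) = 0)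
    (hunit : IsUnit (fderiv ℝ (fun θ => A (θ, u₀, 0)) (Θ (u₀, 0, 0)))) :
    ∃ C, ∀ᶠ x : U × ℝ in 𝓝 (u₀, 0), 0 ≤ x.2 →
      ‖Θ (x.1, x.2, x.2) - Θ (x.1, x.2, 0) - x.2 • deriv (fun s => Θ (x.1, x.2, s)) 0‖ ≤
        C * x.2 ^ 3 := by
  have hF : Differentiable ℝ (perturbedMap A Ψ) :=
    (contDiff_perturbedMap hA hΨ).differentiable two_ne_zero
  have hM := hΘ.thetaJacobian hA hΨ
  have hv := hΘ.rhoSlope hΨ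
  obtain ⟨K, hK, hinv⟩ := hM.continuousAt.exists_forall_norm_le_mul_norm_apply
    (by rwa [thetaJacobian_eq_fderiv (hF _)])
  obtain ⟨LM, NM, hNM, hLM⟩ := hM.exists_lipschitzOnWith
  obtain ⟨Lv, Nv, hNv, hLv⟩ := hv.exists_lipschitzOnWith
  set B := ‖rhoSlope Ψ Θ (u₀, 0, 0)‖ + 1
  have hB : ∀ᶠ q in 𝓝 (u₀, 0, 0), ‖rhoSlope Ψ Θ q‖ ≤ B :=
    hv.continuousAt.norm.eventually (eventually_le_nhds (lt_add_one _))
  have hsol : ∀ᶠ q in 𝓝 (u₀, 0, 0), DifferentiableAt ℝ Θ q ∧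
      thetaJacobian A Ψ Θ q (fderiv ℝ Θ q (0, 0, 1)) = -(q.2.1 • rhoSlope Ψ Θ q) := by
    filter_upwards [hΘ.eventually (by simp), hzero.eventually_nhds] with ⟨u, ε, ρ⟩ hq hq'
    have hd := hq.differentiableAt two_ne_zero
    exact ⟨hd, thetaJacobian_apply_fderiv_eq (hF _) (hΨ.differentiable two_ne_zero _) hd hq'⟩
  set N := NM ∩ Nv ∩ {q | (∀ x, ‖x‖ ≤ K * ‖thetaJacobian A Ψ Θ q x‖) ∧
    ‖rhoSlope Ψ Θ q‖ ≤ B ∧ DifferentiableAt ℝ Θ q ∧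
    thetaJacobian A Ψ Θ q (fderiv ℝ Θ q (0, 0, 1)) = -(q.2.1 • rhoSlope Ψ Θ q)}
  have hN : N ∈ 𝓝 (u₀, 0, 0) := inter_mem (inter_mem hNM hNv) (hinv.and (hB.and hsol))
  have hC : 0 ≤ K * (Lv + LM * K * B) :=
    mul_nonneg hK (add_nonneg Lv.2 (mul_nonneg (mul_nonneg LM.2 hK) (by positivity)))
  refine ⟨K * (Lv + LM * K * B), ?_⟩
  filter_upwards [eventually_forall_mem_Icc_mem hN] with ⟨u, ε⟩ hseg hε
  have hderiv : ∀ s ∈ Icc 0 ε,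
      HasDerivAt (fun s => Θ (u, ε, s)) (fderiv ℝ Θ (u, ε, s) (0, 0, 1)) s := fun s hs =>
    (hseg s hs).2.2.2.1.hasFDerivAt.comp_hasDerivAt s (hasDerivAt_prodMk_prodMk_id u ε s)
  have hW : ∀ s ∈ Icc 0 ε, ‖fderiv ℝ Θ (u, ε, s) (0, 0, 1) - fderiv ℝ Θ (u, ε, 0) (0, 0, 1)‖ ≤
      K * (Lv + LM * K * B) * (ε * ε) := fun s hs =>
    (norm_sub_le_mul_of_lipschitzOnWith hK (fun q hq => hq.2.1) (fun q hq => hq.2.2.1)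
      (hLM.mono fun q hq => hq.1.1) (hLv.mono fun q hq => hq.1.2) (fun q hq => hq.2.2.2.2) hε
      hs.1 (hseg 0 ⟨le_rfl, hε⟩) (hseg s hs)).trans (by gcongr; exact hs.2)
  rw [(hderiv 0 ⟨le_rfl, hε⟩).deriv]
  calc _ ≤ K * (Lv + LM * K * B) * (ε * ε) * ε :=
        norm_sub_sub_smul_le_of_norm_deriv_sub_le hε hderiv hW
    _ = K * (Lv + LM * K * B) * ε ^ 3 := by ring

theorem stmt9_general (p d : ℕ)
    (θ₀ : Fin p → ℝ) (u₀ : Fin d → ℝ)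
    (a b c : (Fin p → ℝ) → (Fin d → ℝ) → (Fin p → ℝ))
    (ha : ContDiff ℝ 2 (fun q : (Fin p → ℝ) × (Fin d → ℝ) => a q.1 q.2))
    (hb : ContDiff ℝ 2 (fun q : (Fin p → ℝ) × (Fin d → ℝ) => b q.1 q.2))
    (hc : ContDiff ℝ 2 (fun q : (Fin p → ℝ) × (Fin d → ℝ) => c q.1 q.2))
    (h : (Fin p → ℝ) → (Fin d → ℝ) → ℝ → (Fin p → ℝ))
    (hh : ContDiff ℝ 2 (fun q : (Fin p → ℝ) × (Fin d → ℝ) × ℝ => h q.1 q.2.1 q.2.2))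
    (F : (Fin p → ℝ) → (Fin d → ℝ) → ℝ → ℝ → (Fin p → ℝ))
    (hF : ∀ θ u ε ρ, F θ u ε ρ = a θ u + ε • b θ u + ε • (ρ • c θ u + h θ u ρ))
    (Ja : Matrix (Fin p) (Fin p) ℝ)
    (hJa : ∀ i j, Ja i j = fderiv ℝ (fun θ => a θ u₀ i) θ₀ (Pi.single j 1))
    (hJaInv : IsUnit Ja.det)
    (G : (Fin d → ℝ) → ℝ → ℝ → (Fin p → ℝ))
    (V : Set ((Fin d → ℝ) × ℝ × ℝ)) (hVopen : IsOpen V)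
    (hV : ((u₀, 0, 0) : (Fin d → ℝ) × ℝ × ℝ) ∈ V)
    (hG : ContDiffOn ℝ 2 (fun q : (Fin d → ℝ) × ℝ × ℝ => G q.1 q.2.1 q.2.2) V)
    (hG0 : G u₀ 0 0 = θ₀)
    (hFG : ∀ q ∈ V, F (G q.1 q.2.1 q.2.2) q.1 q.2.1 q.2.2 = 0)
    (u : ℕ → Fin d → ℝ) (hu : Tendsto u atTop (nhds u₀))
    (δ : ℕ → Fin p → ℝ)
    (hδ : ∀ n : ℕ, δ n = G (u n) ((n:ℝ)⁻¹) ((n:ℝ)⁻¹) - G (u n) ((n:ℝ)⁻¹) 0)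
    (δhat : ℕ → Fin p → ℝ)
    (hδhat : ∀ n : ℕ,
      δhat n = ((n:ℝ)⁻¹) • deriv (fun ρ => G (u n) ((n:ℝ)⁻¹) ρ) 0) :
    ∃ C > (0:ℝ), ∀ᶠ n : ℕ in atTop, ‖δ n - δhat n‖ ≤ C * ((n:ℝ)^3)⁻¹ := by
  set A : (Fin p → ℝ) × (Fin d → ℝ) × ℝ → Fin p → ℝ := fun z => a z.1 z.2.1 + z.2.2 • b z.1 z.2.1
  set Ψ : (Fin p → ℝ) × (Fin d → ℝ) × ℝ → Fin p → ℝ :=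
    fun z => z.2.2 • c z.1 z.2.1 + h z.1 z.2.1 z.2.2
  have hA : ContDiff ℝ 2 A := by fun_prop
  have hΨ : ContDiff ℝ 2 Ψ := by fun_prop
  have hzero : ∀ᶠ q in 𝓝 (u₀, 0, 0), perturbedMap A Ψ (G q.1 q.2.1 q.2.2, q) = 0 := by
    filter_upwards [hVopen.mem_nhds hV] with q hq
    exact (hF _ _ _ _).symm.trans (hFG q hq)
  have hunit : IsUnit (fderiv ℝ (fun θ => A (θ, u₀, 0)) (G u₀ 0 0)) := by
    simp only [A, zero_smul, add_zero, hG0]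
    exact isUnit_fderiv_of_isUnit_det
      ((ha.comp (contDiff_id.prodMk contDiff_const)).differentiable two_ne_zero θ₀) hJa hJaInv
  obtain ⟨C, hC⟩ := exists_norm_sub_sub_smul_deriv_le hA hΨ
    (hG.contDiffAt (hVopen.mem_nhds hV)) hzero hunit
  have hlim : Tendsto (fun n : ℕ => (u n, (n : ℝ)⁻¹)) atTop (𝓝 (u₀, 0)) :=
    hu.prodMk_nhds tendsto_inv_atTop_nhds_zero_nat
  refine ⟨max C 1, by positivity, ?_⟩
  filter_upwards [hlim.eventually hC] with n hn
  rw [hδ, hδhat, ← inv_pow]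
  exact (hn (by positivity)).trans (by gcongr; exact le_max_left _ _)

/-- the true discrepancy `δ_n = G(u_n,1/n,1/n) − G(u_n,1/n,0)` and
its approximation `δ̂_n = (1/n)∂G/∂ρ(u_n,1/n,0)` differ by `O(n⁻³)`. -/
theorem stmt9 (p d : ℕ) (hp : 0 < p) (hd : 0 < d)
    (θ₀ : Fin p → ℝ) (u₀ : Fin d → ℝ)
    (a b c : (Fin p → ℝ) → (Fin d → ℝ) → (Fin p → ℝ))
    (ha : ContDiff ℝ 2 (fun q : (Fin p → ℝ) × (Fin d → ℝ) => a q.1 q.2))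
    (hb : ContDiff ℝ 2 (fun q : (Fin p → ℝ) × (Fin d → ℝ) => b q.1 q.2))
    (hc : ContDiff ℝ 2 (fun q : (Fin p → ℝ) × (Fin d → ℝ) => c q.1 q.2))
    (h : (Fin p → ℝ) → (Fin d → ℝ) → ℝ → (Fin p → ℝ))
    (hh : ContDiff ℝ 2 (fun q : (Fin p → ℝ) × (Fin d → ℝ) × ℝ => h q.1 q.2.1 q.2.2))
    (hh0 : ∀ θ u, h θ u 0 = 0)
    (hhρ : ∀ θ u, deriv (fun ρ => h θ u ρ) 0 = 0)
    (F : (Fin p → ℝ) → (Fin d → ℝ) → ℝ → ℝ → (Fin p → ℝ))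
    (hF : ∀ θ u ε ρ, F θ u ε ρ = a θ u + ε • b θ u + ε • (ρ • c θ u + h θ u ρ))
    (ha0 : a θ₀ u₀ = 0)
    (Ja : Matrix (Fin p) (Fin p) ℝ)
    (hJa : ∀ i j, Ja i j = fderiv ℝ (fun θ => a θ u₀ i) θ₀ (Pi.single j 1))
    (hJaInv : IsUnit Ja.det)
    (G : (Fin d → ℝ) → ℝ → ℝ → (Fin p → ℝ))
    (V : Set ((Fin d → ℝ) × ℝ × ℝ)) (hVopen : IsOpen V)
    (hV : ((u₀, 0, 0) : (Fin d → ℝ) × ℝ × ℝ) ∈ V)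
    (hG : ContDiffOn ℝ 2 (fun q : (Fin d → ℝ) × ℝ × ℝ => G q.1 q.2.1 q.2.2) V)
    (hG0 : G u₀ 0 0 = θ₀)
    (hFG : ∀ q ∈ V, F (G q.1 q.2.1 q.2.2) q.1 q.2.1 q.2.2 = 0)
    (u : ℕ → Fin d → ℝ) (hu : Tendsto u atTop (nhds u₀))
    (δ : ℕ → Fin p → ℝ)
    (hδ : ∀ n : ℕ, δ n = G (u n) ((n:ℝ)⁻¹) ((n:ℝ)⁻¹) - G (u n) ((n:ℝ)⁻¹) 0)
    (δhat : ℕ → Fin p → ℝ)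
    (hδhat : ∀ n : ℕ,
      δhat n = ((n:ℝ)⁻¹) • deriv (fun ρ => G (u n) ((n:ℝ)⁻¹) ρ) 0) :
    ∃ C > (0:ℝ), ∀ᶠ n : ℕ in atTop, ‖δ n - δhat n‖ ≤ C * ((n:ℝ)^3)⁻¹ :=
  stmt9_general p d θ₀ u₀ a b c ha hb hc h hh F hF Ja hJa hJaInv G V hVopen hV hG hG0 hFG u hu δ hδ
    δhat hδhat
end

section
/- Let p, d be positive integers, (θ₀, u₀) ∈ ℝ^p × ℝ^d. Let a, b, c : ℝ^p × ℝ^d → ℝ^p be twice continuously differentiable, and let h : ℝ^p × ℝ^d × ℝ → ℝ^p be twice continuously differentiable with h(θ, u, 0) = 0 and ∂h/∂ρ(θ, u, 0) = 0 for all (θ, u). Define F(θ, u, ε, ρ) = a(θ, u) + ε·b(θ, u) + ε·(ρ·c(θ, u) + h(θ, u, ρ)). Assume a(θ₀, u₀) = 0 and ∇_θa(θ₀, u₀) invertible, and let G be twice continuously differentiable on a neighborhood of (u₀, 0, 0) with G(u₀, 0, 0) = θ₀ and F(G(u, ε, ρ), u, ε, ρ) = 0 there. Define k₀ = −(∇_θa(θ₀,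 u₀))⁻¹ · c(θ₀, u₀) ∈ ℝ^p. Then for every sequence u_n → u₀, with δ_n = G(u_n, 1/n, 1/n) − G(u_n, 1/n, 0) and δ̂_n = (1/n)·∂G/∂ρ(u_n, 1/n, 0), both n²·δ̂_n → k₀ and n²·δ_n → k₀ as n → ∞. -/
open Matrix Filter Set Topology

/-!
Differentiating `F(G q, q) = 0` in `ρ` gives `∇_θF · ∂_ρG + ε (c + ∂_ρh) = 0`, so near
`(u₀, 0, 0)` we get `∂_ρG(u, ε, ρ) = ε L(u, ε, ρ)` with `L = -(∇_θF)⁻¹ (c + ∂_ρh)` evaluated at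
`(G(u, ε, ρ), u, ε, ρ)`. This `L` is continuous, and `L(u₀, 0, 0) = k₀` because `∇_θF = ∇_θa` at
`ε = 0` and `∂_ρh(θ, u, 0) = 0`. Hence `n² δ̂_n = L(u_n, 1/n, 0) → k₀`, while by the mean value
theorem `n² δ_n` lies within `sup_{0 ≤ ρ ≤ 1/n} ‖L(u_n, 1/n, ρ) - k₀‖` of `k₀`.
-/

section ImplicitDifferentiation

variable {E P : Type*} [NormedAddCommGroup E] [NormedSpace ℝ E]
  [NormedAddCommGroup P] [NormedSpace ℝ P] {Φ : E × P → E} {g : P → E} {q : P}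

theorem fderiv_apply_eq_neg_ringInverse (hΦ : DifferentiableAt ℝ Φ (g q, q))
    (hg : DifferentiableAt ℝ g q) (hzero : ∀ᶠ q' in 𝓝 q, Φ (g q', q') = 0)
    (hM : IsUnit ((fderiv ℝ Φ (g q, q)).comp (.inl ℝ E P))) (v : P) :
    fderiv ℝ g q v =
      -Ring.inverse ((fderiv ℝ Φ (g q, q)).comp (.inl ℝ E P)) (fderiv ℝ Φ (g q, q) (0, v)) := by
  set M := (fderiv ℝ Φ (g q, q)).comp (.inl ℝ E P)
  have hchain : fderiv ℝ Φ (g q, q) (fderiv ℝ g q v, v) = 0 := by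
    have hcomp := hΦ.hasFDerivAt.comp (f := fun q' => (g q', q')) q
      (hg.hasFDerivAt.prodMk (hasFDerivAt_id q))
    have hconst : (fun q' => Φ (g q', q')) =ᶠ[𝓝 q] fun _ => 0 := hzero
    have h0 := hcomp.fderiv.symm.trans (hconst.fderiv_eq.trans (fderiv_const_apply 0))
    simpa using congrArg (· v) h0
  have hsplit : M (fderiv ℝ g q v) = -fderiv ℝ Φ (g q, q) (0, v) := by
    rw [show (fderiv ℝ g q v, v) = (fderiv ℝ g q v, 0) + (0, v) by simp, map_add] at hchain
    exact eq_neg_of_add_eq_zero_left hchain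
  calc fderiv ℝ g q v = (Ring.inverse M * M) (fderiv ℝ g q v) := by
        rw [Ring.inverse_mul_cancel _ hM, one_apply_eq_self]
    _ = _ := by rw [mul_apply_eq_comp, hsplit, map_neg]

end ImplicitDifferentiation

section PerturbedScore

variable {E U : Type*} [NormedAddCommGroup E] [NormedSpace ℝ E]
  {a b c : E → U → E} {h : E → U → ℝ → E}

/-- The paper's `F(θ, u, ε, ρ)`, uncurried as a function of `z = (θ, (u, ε, ρ))`. -/
def perturbedScore (a b c : E → U → E) (h : E → U → ℝ → E) (z : E × U × ℝ × ℝ) : E :=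
  a z.1 z.2.1 + z.2.2.1 • b z.1 z.2.1 + z.2.2.1 • (z.2.2.2 • c z.1 z.2.1 + h z.1 z.2.1 z.2.2.2)

@[simp]
theorem perturbedScore_eps_zero (θ : E) (u : U) (ρ : ℝ) :
    perturbedScore a b c h (θ, u, 0, ρ) = a θ u := by
  simp [perturbedScore]

theorem hasDerivAt_perturbedScore_rho {θ : E} {u : U} {ε ρ : ℝ}
    (hh : DifferentiableAt ℝ (h θ u) ρ) :
    HasDerivAt (fun ρ => perturbedScore a b c h (θ, u, ε, ρ))
      (ε • (c θ u + deriv (h θ u) ρ)) ρ := by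
  have := ((((hasDerivAt_id ρ).smul_const (c θ u)).add hh.hasDerivAt).const_smul ε).const_add
    (a θ u + ε • b θ u)
  simpa [perturbedScore, add_assoc] using this

variable [NormedAddCommGroup U] [NormedSpace ℝ U]

theorem contDiff_perturbedScore {n : WithTop ℕ∞}
    (ha : ContDiff ℝ n fun q : E × U => a q.1 q.2) (hb : ContDiff ℝ n fun q : E × U => b q.1 q.2)
    (hc : ContDiff ℝ n fun q : E × U => c q.1 q.2)
    (hh : ContDiff ℝ n fun w : E × U × ℝ => h w.1 w.2.1 w.2.2) :
    ContDiff ℝ n (perturbedScore a b c h) := by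
  have hθu : ContDiff ℝ n fun z : E × U × ℝ × ℝ => (z.1, z.2.1) := by fun_prop
  have hθuρ : ContDiff ℝ n fun z : E × U × ℝ × ℝ => (z.1, z.2.1, z.2.2.2) := by fun_prop
  have hε : ContDiff ℝ n fun z : E × U × ℝ × ℝ => z.2.2.1 := by fun_prop
  have hρ : ContDiff ℝ n fun z : E × U × ℝ × ℝ => z.2.2.2 := by fun_prop
  exact ((ha.comp hθu).add (hε.smul (hb.comp hθu))).add
    (hε.smul ((hρ.smul (hc.comp hθu)).add (hh.comp hθuρ)))

theorem fderiv_perturbedScore_apply_rho {z : E × U × ℝ × ℝ}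
    (hF : DifferentiableAt ℝ (perturbedScore a b c h) z)
    (hh : DifferentiableAt ℝ (h z.1 z.2.1) z.2.2.2) :
    fderiv ℝ (perturbedScore a b c h) z (0, 0, 0, 1) =
      z.2.2.1 • (c z.1 z.2.1 + deriv (h z.1 z.2.1) z.2.2.2) := by
  obtain ⟨θ, u, ε, ρ⟩ := z
  have hline : HasDerivAt (fun s : ℝ => (θ, u, ε, s)) (0, 0, 0, 1) ρ :=
    (hasDerivAt_const ρ θ).prodMk ((hasDerivAt_const ρ u).prodMk
      ((hasDerivAt_const ρ ε).prodMk (hasDerivAt_id ρ)))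
  have hcomp := hF.hasFDerivAt.comp_hasDerivAt ρ hline
  exact hcomp.unique (hasDerivAt_perturbedScore_rho hh)

theorem fderiv_perturbedScore_comp_inl_of_eps_zero {θ : E} {u : U} {ρ : ℝ}
    (hF : DifferentiableAt ℝ (perturbedScore a b c h) (θ, u, 0, ρ)) :
    (fderiv ℝ (perturbedScore a b c h) (θ, u, 0, ρ)).comp (.inl ℝ E (U × ℝ × ℝ)) =
      fderiv ℝ (fun θ => a θ u) θ := by
  have hpartial :=
    hF.hasFDerivAt.comp θ (hasFDerivAt_prodMk_left (𝕜 := ℝ) θ ((u, 0, ρ) : U × ℝ × ℝ))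
  simpa [Function.comp_def] using hpartial.fderiv.symm

theorem hasDerivAt_of_differentiable_uncurry₃
    (hh : Differentiable ℝ fun w : E × U × ℝ => h w.1 w.2.1 w.2.2) (θ : E) (u : U) (ρ : ℝ) :
    HasDerivAt (h θ u) (fderiv ℝ (fun w : E × U × ℝ => h w.1 w.2.1 w.2.2) (θ, u, ρ) (0, 0, 1)) ρ :=
  (hh _).hasFDerivAt.comp_hasDerivAt ρ
    ((hasDerivAt_const ρ θ).prodMk ((hasDerivAt_const ρ u).prodMk (hasDerivAt_id ρ)))

theorem continuous_deriv_of_contDiff_uncurry₃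
    (hh : ContDiff ℝ 1 fun w : E × U × ℝ => h w.1 w.2.1 w.2.2) :
    Continuous fun w : E × U × ℝ => deriv (h w.1 w.2.1) w.2.2 := by
  have hhd := hh.differentiable one_ne_zero
  simpa only [(hasDerivAt_of_differentiable_uncurry₃ hhd _ _ _).deriv] using
    (hh.continuous_fderiv one_ne_zero).clm_apply continuous_const

end PerturbedScore

section ImplicitSolution

variable {E U : Type*} [NormedAddCommGroup E] [NormedSpace ℝ E] [CompleteSpace E]
  [NormedAddCommGroup U] [NormedSpace ℝ U] {a b c : E → U → E} {h : E → U → ℝ → E}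
  {θ₀ : E} {u₀ : U} {G : U → ℝ → ℝ → E} {V : Set (U × ℝ × ℝ)}

theorem exists_hasDerivAt_rho_eq_smul
    (ha : ContDiff ℝ 1 fun q : E × U => a q.1 q.2) (hb : ContDiff ℝ 1 fun q : E × U => b q.1 q.2)
    (hc : ContDiff ℝ 1 fun q : E × U => c q.1 q.2)
    (hh : ContDiff ℝ 1 fun w : E × U × ℝ => h w.1 w.2.1 w.2.2) (hhρ : deriv (h θ₀ u₀) 0 = 0)
    (hA : IsUnit (fderiv ℝ (fun θ => a θ u₀) θ₀))
    (hVopen : IsOpen V) (hV : (u₀, 0, 0) ∈ V)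
    (hG : DifferentiableOn ℝ (fun q : U × ℝ × ℝ => G q.1 q.2.1 q.2.2) V) (hG0 : G u₀ 0 0 = θ₀)
    (hFG : ∀ q ∈ V, perturbedScore a b c h (G q.1 q.2.1 q.2.2, q) = 0) :
    ∃ L : U × ℝ × ℝ → E, ContinuousAt L (u₀, 0, 0) ∧
      L (u₀, 0, 0) = -Ring.inverse (fderiv ℝ (fun θ => a θ u₀) θ₀) (c θ₀ u₀) ∧
      ∀ᶠ q in 𝓝 (u₀, 0, 0), HasDerivAt (fun ρ => G q.1 q.2.1 ρ) (q.2.1 • L q) q.2.2 := by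
  set Φ := perturbedScore a b c h
  set g : U × ℝ × ℝ → E := fun q => G q.1 q.2.1 q.2.2
  set M : E × U × ℝ × ℝ → E →L[ℝ] E := fun z => (fderiv ℝ Φ z).comp (.inl ℝ E (U × ℝ × ℝ))
  have hΦ : ContDiff ℝ 1 Φ := contDiff_perturbedScore ha hb hc hh
  have hΦd : Differentiable ℝ Φ := hΦ.differentiable one_ne_zero
  have hhd : Differentiable ℝ fun w : E × U × ℝ => h w.1 w.2.1 w.2.2 :=
    hh.differentiable one_ne_zero
  have hVnhds : V ∈ 𝓝 ((u₀, 0, 0) : U × ℝ × ℝ) := hVopen.mem_nhds hV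
  have hg₀ : ContinuousAt g (u₀, 0, 0) := (hG.differentiableAt hVnhds).continuousAt
  have hMg : ContinuousAt (fun q => M (g q, q)) (u₀, 0, 0) :=
    ((hΦ.continuous_fderiv one_ne_zero).clm_comp continuous_const).continuousAt.comp
      (hg₀.prodMk continuousAt_id)
  have hMg₀ : M (g (u₀, 0, 0), (u₀, 0, 0)) = fderiv ℝ (fun θ => a θ u₀) θ₀ := by
    simp only [g, hG0]
    exact fderiv_perturbedScore_comp_inl_of_eps_zero (hΦd _)
  let L : U × ℝ × ℝ → E := fun q =>
    -Ring.inverse (M (g q, q)) (c (g q) q.1 + deriv (h (g q) q.1) q.2.2)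
  refine ⟨L, ?_, ?_, ?_⟩
  · have hinv : ContinuousAt Ring.inverse (M (g (u₀, 0, 0), (u₀, 0, 0))) := by
      rw [hMg₀]; exact NormedRing.inverse_continuousAt hA.unit
    have hw : ContinuousAt (fun q : U × ℝ × ℝ => c (g q) q.1 + deriv (h (g q) q.1) q.2.2)
        (u₀, 0, 0) := by
      have hgu : ContinuousAt (fun q : U × ℝ × ℝ => (g q, q.1)) (u₀, 0, 0) :=
        hg₀.prodMk (by fun_prop)
      have hguρ : ContinuousAt (fun q : U × ℝ × ℝ => (g q, q.1, q.2.2)) (u₀, 0, 0) :=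
        hg₀.prodMk (by fun_prop)
      exact (hc.continuous.continuousAt.comp hgu).add
        ((continuous_deriv_of_contDiff_uncurry₃ hh).continuousAt.comp hguρ)
    exact ((hinv.comp (f := fun q => M (g q, q)) hMg).clm_apply hw).neg
  · simp only [L, hMg₀]
    simp [g, hG0, hhρ]
  · filter_upwards [eventually_mem_nhds_iff.mpr hVnhds,
      hMg.eventually (Units.isOpen.mem_nhds (by simpa only [mem_ofPred_eq, hMg₀] using hA))]
      with q hqV hunit
    have hgd : DifferentiableAt ℝ g q := hG.differentiableAt hqV
    have hline : HasDerivAt (fun ρ => (q.1, q.2.1, ρ)) (0, 0, 1) q.2.2 :=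
      (hasDerivAt_const _ q.1).prodMk ((hasDerivAt_const _ q.2.1).prodMk (hasDerivAt_id _))
    have hderiv := hgd.hasFDerivAt.comp_hasDerivAt q.2.2 hline
    rw [fderiv_apply_eq_neg_ringInverse (hΦd _) hgd (eventually_of_mem hqV hFG) hunit,
      fderiv_perturbedScore_apply_rho (hΦd _)
        (hasDerivAt_of_differentiable_uncurry₃ hhd _ _ _).differentiableAt] at hderiv
    rwa [map_smul, ← smul_neg] at hderiv

end ImplicitSolution

theorem isUnit_and_ringInverse_apply_eq_inv_mulVec {𝕜 n : Type*} [NontriviallyNormedField 𝕜]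
    [CompleteSpace 𝕜] [Fintype n] [DecidableEq n] {A : (n → 𝕜) →L[𝕜] (n → 𝕜)} {J : Matrix n n 𝕜}
    (hA : ∀ i j, J i j = A (Pi.single j 1) i) (hJ : IsUnit J.det) :
    IsUnit A ∧ ∀ y, Ring.inverse A y = J⁻¹ *ᵥ y := by
  have hAJ : ∀ x, A x = J *ᵥ x := by
    have hJA : J = LinearMap.toMatrix' (A : (n → 𝕜) →ₗ[𝕜] (n → 𝕜)) := by
      ext i j; rw [hA, LinearMap.toMatrix'_apply]; rfl
    intro x
    rw [hJA, LinearMap.toMatrix'_mulVec]; rfl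
  let B : (n → 𝕜) →L[𝕜] (n → 𝕜) := LinearMap.toContinuousLinearMap (Matrix.toLin' J⁻¹)
  have hB : ∀ y, B y = J⁻¹ *ᵥ y := Matrix.toLin'_apply J⁻¹
  let uA : ((n → 𝕜) →L[𝕜] (n → 𝕜))ˣ :=
    { val := A, inv := B
      val_inv := by ext1 y; simp [hAJ, hB, mulVec_mulVec, mul_nonsing_inv J hJ]
      inv_val := by ext1 y; simp [hAJ, hB, mulVec_mulVec, nonsing_inv_mul J hJ] }
  exact ⟨uA.isUnit, fun y => by rw [show A = uA from rfl, Ring.inverse_unit]; exact hB y⟩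

section Asymptotics

variable {E U ι : Type*} [NormedAddCommGroup E] [NormedSpace ℝ E] [PseudoMetricSpace U]

theorem norm_inv_sq_smul_sub_sub_le {f L : ℝ → E} {k : E} {t C : ℝ} (ht : 0 < t)
    (hf : ∀ ρ ∈ Icc 0 t, HasDerivAt f (t • L ρ) ρ) (hL : ∀ ρ ∈ Icc 0 t, ‖L ρ - k‖ ≤ C) :
    ‖(t ^ 2)⁻¹ • (f t - f 0) - k‖ ≤ C := by
  set φ : ℝ → E := fun ρ => f ρ - ρ • t • k
  have hφ : ∀ ρ ∈ Icc 0 t, HasDerivWithinAt φ (t • (L ρ - k)) (Icc 0 t) ρ := fun ρ hρ => by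
    rw [smul_sub]
    simpa using ((hf ρ hρ).fun_sub ((hasDerivAt_id ρ).smul_const (t • k))).hasDerivWithinAt
  have hbound : ∀ ρ ∈ Icc 0 t, ‖t • (L ρ - k)‖ ≤ t * C := fun ρ hρ => by
    rw [norm_smul, Real.norm_of_nonneg ht.le]
    exact mul_le_mul_of_nonneg_left (hL ρ hρ) ht.le
  have hmvt := (convex_Icc 0 t).norm_image_sub_le_of_norm_hasDerivWithin_le hφ hbound
    (left_mem_Icc.mpr ht.le) (right_mem_Icc.mpr ht.le)
  have heq : (t ^ 2)⁻¹ • (f t - f 0) - k = (t ^ 2)⁻¹ • (φ t - φ 0) := by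
    have hφt : φ t - φ 0 = (f t - f 0) - t ^ 2 • k := by
      simp only [φ, zero_smul, sub_zero, smul_smul, sq, zero_mul]
      abel
    rw [hφt, smul_sub _ _ (t ^ 2 • k), smul_smul, inv_mul_cancel₀ (by positivity), one_smul]
  rw [heq, norm_smul, Real.norm_of_nonneg (by positivity)]
  calc (t ^ 2)⁻¹ * ‖φ t - φ 0‖ ≤ (t ^ 2)⁻¹ * (t * C * ‖t - 0‖) := by gcongr
    _ = C := by rw [sub_zero, Real.norm_of_nonneg ht.le]; field_simp

theorem eventually_forall_Icc_of_eventually_nhds {l : Filter ι} {P : U × ℝ × ℝ → Prop}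
    {u₀ : U} (hP : ∀ᶠ q in 𝓝 (u₀, 0, 0), P q) {u : ι → U} (hu : Tendsto u l (𝓝 u₀))
    {t : ι → ℝ} (ht : Tendsto t l (𝓝 0)) :
    ∀ᶠ i in l, ∀ ρ ∈ Icc 0 (t i), P (u i, t i, ρ) := by
  obtain ⟨r, hr, hball⟩ := Metric.eventually_nhds_iff_ball.mp hP
  filter_upwards [hu (Metric.ball_mem_nhds _ hr), ht (Metric.ball_mem_nhds _ hr)]
    with i hui hti ρ ⟨hρ0, hρt⟩
  rw [mem_preimage, Metric.mem_ball, Real.dist_eq, sub_zero] at hti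
  have hρr : dist ρ 0 < r := by
    rw [Real.dist_eq, sub_zero, abs_of_nonneg hρ0]
    exact hρt.trans_lt ((le_abs_self _).trans_lt hti)
  refine hball _ (max_lt hui (max_lt ?_ hρr))
  rwa [Real.dist_eq, sub_zero]

variable {G : U → ℝ → ℝ → E} {L : U × ℝ × ℝ → E} {u₀ : U} {l : Filter ι} {u : ι → U}
  {t : ι → ℝ}

theorem tendsto_inv_sq_smul_smul_deriv (hL : ContinuousAt L (u₀, 0, 0))
    (hG : ∀ᶠ q in 𝓝 (u₀, 0, 0), HasDerivAt (fun ρ => G q.1 q.2.1 ρ) (q.2.1 • L q) q.2.2)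
    (hu : Tendsto u l (𝓝 u₀)) (ht : Tendsto t l (𝓝[>] 0)) :
    Tendsto (fun i => (t i ^ 2)⁻¹ • (t i • deriv (fun ρ => G (u i) (t i) ρ) 0)) l
      (𝓝 (L (u₀, 0, 0))) := by
  have hq : Tendsto (fun i => (u i, t i, (0 : ℝ))) l (𝓝 (u₀, 0, 0)) :=
    hu.prodMk_nhds ((tendsto_nhds_of_tendsto_nhdsWithin ht).prodMk_nhds tendsto_const_nhds)
  refine (hL.tendsto.comp hq).congr' ?_
  filter_upwards [hq.eventually hG, ht.eventually self_mem_nhdsWithin] with i hGi hti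
  rw [Function.comp_apply, hGi.deriv, smul_smul, smul_smul, mul_assoc, ← sq,
    inv_mul_cancel₀ (pow_pos hti 2).ne', one_smul]

theorem tendsto_inv_sq_smul_sub (hL : ContinuousAt L (u₀, 0, 0))
    (hG : ∀ᶠ q in 𝓝 (u₀, 0, 0), HasDerivAt (fun ρ => G q.1 q.2.1 ρ) (q.2.1 • L q) q.2.2)
    (hu : Tendsto u l (𝓝 u₀)) (ht : Tendsto t l (𝓝[>] 0)) :
    Tendsto (fun i => (t i ^ 2)⁻¹ • (G (u i) (t i) (t i) - G (u i) (t i) 0)) l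
      (𝓝 (L (u₀, 0, 0))) := by
  refine Metric.tendsto_nhds.mpr fun η hη => ?_
  have hnear : ∀ᶠ q in 𝓝 (u₀, 0, 0),
      HasDerivAt (fun ρ => G q.1 q.2.1 ρ) (q.2.1 • L q) q.2.2 ∧ ‖L q - L (u₀, 0, 0)‖ ≤ η / 2 :=
    hG.and (by simpa only [dist_eq_norm] using
      hL.eventually (Metric.closedBall_mem_nhds _ (half_pos hη)))
  filter_upwards [eventually_forall_Icc_of_eventually_nhds hnear hu
    (tendsto_nhds_of_tendsto_nhdsWithin ht), ht.eventually self_mem_nhdsWithin] with i hi hti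
  rw [dist_eq_norm]
  exact (norm_inv_sq_smul_sub_sub_le hti (fun ρ hρ => (hi ρ hρ).1)
    (fun ρ hρ => (hi ρ hρ).2)).trans_lt (half_lt_self hη)

end Asymptotics

theorem stmt10_general (p d : ℕ)
    (θ₀ : Fin p → ℝ) (u₀ : Fin d → ℝ)
    (a b c : (Fin p → ℝ) → (Fin d → ℝ) → (Fin p → ℝ))
    (ha : ContDiff ℝ 2 (fun q : (Fin p → ℝ) × (Fin d → ℝ) => a q.1 q.2))
    (hb : ContDiff ℝ 2 (fun q : (Fin p → ℝ) × (Fin d → ℝ) => b q.1 q.2))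
    (hc : ContDiff ℝ 2 (fun q : (Fin p → ℝ) × (Fin d → ℝ) => c q.1 q.2))
    (h : (Fin p → ℝ) → (Fin d → ℝ) → ℝ → (Fin p → ℝ))
    (hh : ContDiff ℝ 2 (fun q : (Fin p → ℝ) × (Fin d → ℝ) × ℝ => h q.1 q.2.1 q.2.2))
    (hhρ : ∀ θ u, deriv (fun ρ => h θ u ρ) 0 = 0)
    (F : (Fin p → ℝ) → (Fin d → ℝ) → ℝ → ℝ → (Fin p → ℝ))
    (hF : ∀ θ u ε ρ, F θ u ε ρ = a θ u + ε • b θ u + ε • (ρ • c θ u + h θ u ρ))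
    (Ja : Matrix (Fin p) (Fin p) ℝ)
    (hJa : ∀ i j, Ja i j = fderiv ℝ (fun θ => a θ u₀ i) θ₀ (Pi.single j 1))
    (hJaInv : IsUnit Ja.det)
    (G : (Fin d → ℝ) → ℝ → ℝ → (Fin p → ℝ))
    (V : Set ((Fin d → ℝ) × ℝ × ℝ)) (hVopen : IsOpen V)
    (hV : ((u₀, 0, 0) : (Fin d → ℝ) × ℝ × ℝ) ∈ V)
    (hG : ContDiffOn ℝ 2 (fun q : (Fin d → ℝ) × ℝ × ℝ => G q.1 q.2.1 q.2.2) V)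
    (hG0 : G u₀ 0 0 = θ₀)
    (hFG : ∀ q ∈ V, F (G q.1 q.2.1 q.2.2) q.1 q.2.1 q.2.2 = 0)
    (k₀ : Fin p → ℝ) (hk₀ : k₀ = -(Ja⁻¹ *ᵥ c θ₀ u₀))
    (u : ℕ → Fin d → ℝ) (hu : Tendsto u atTop (nhds u₀))
    (δ : ℕ → Fin p → ℝ)
    (hδ : ∀ n : ℕ, δ n = G (u n) ((n:ℝ)⁻¹) ((n:ℝ)⁻¹) - G (u n) ((n:ℝ)⁻¹) 0)
    (δhat : ℕ → Fin p → ℝ)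
    (hδhat : ∀ n : ℕ,
      δhat n = ((n:ℝ)⁻¹) • deriv (fun ρ => G (u n) ((n:ℝ)⁻¹) ρ) 0) :
    Tendsto (fun n : ℕ => ((n:ℝ)^2) • δhat n) atTop (nhds k₀) ∧
    Tendsto (fun n : ℕ => ((n:ℝ)^2) • δ n) atTop (nhds k₀) := by
  have haθ : DifferentiableAt ℝ (fun θ => a θ u₀) θ₀ :=
    (ha.differentiable two_ne_zero _).comp θ₀ (hasFDerivAt_prodMk_left θ₀ u₀).differentiableAt
  obtain ⟨hA, hAinv⟩ :=
    isUnit_and_ringInverse_apply_eq_inv_mulVec (A := fderiv ℝ (fun θ => a θ u₀) θ₀)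
      (fun i j => by rw [hJa, fderiv_apply haθ]; rfl) hJaInv
  obtain ⟨L, hLcont, hL₀, hLderiv⟩ := exists_hasDerivAt_rho_eq_smul (ha.of_le one_le_two)
    (hb.of_le one_le_two) (hc.of_le one_le_two) (hh.of_le one_le_two) (hhρ θ₀ u₀) hA hVopen hV
    (hG.differentiableOn two_ne_zero) hG0 fun q hq => by rw [← hFG q hq, hF]; rfl
  have ht : Tendsto (fun n : ℕ => (n : ℝ)⁻¹) atTop (𝓝[>] 0) :=
    tendsto_inv_atTop_nhdsGT_zero.comp tendsto_natCast_atTop_atTop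
  have hδhat_lim := tendsto_inv_sq_smul_smul_deriv hLcont hLderiv hu ht
  have hδ_lim := tendsto_inv_sq_smul_sub hLcont hLderiv hu ht
  simp only [inv_pow, inv_inv, hL₀, hAinv, ← hk₀] at hδhat_lim hδ_lim
  exact ⟨hδhat_lim.congr fun n => by rw [hδhat], hδ_lim.congr fun n => by rw [hδ]⟩

/-- with `k₀ = −(∇_θa(θ₀,u₀))⁻¹ c(θ₀,u₀)`, both `n²·δ̂_n → k₀`
and `n²·δ_n → k₀`. -/
theorem stmt10 (p d : ℕ) (hp : 0 < p) (hd : 0 < d)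
    (θ₀ : Fin p → ℝ) (u₀ : Fin d → ℝ)
    (a b c : (Fin p → ℝ) → (Fin d → ℝ) → (Fin p → ℝ))
    (ha : ContDiff ℝ 2 (fun q : (Fin p → ℝ) × (Fin d → ℝ) => a q.1 q.2))
    (hb : ContDiff ℝ 2 (fun q : (Fin p → ℝ) × (Fin d → ℝ) => b q.1 q.2))
    (hc : ContDiff ℝ 2 (fun q : (Fin p → ℝ) × (Fin d → ℝ) => c q.1 q.2))
    (h : (Fin p → ℝ) → (Fin d → ℝ) → ℝ → (Fin p → ℝ))
    (hh : ContDiff ℝ 2 (fun q : (Fin p → ℝ) × (Fin d → ℝ) × ℝ => h q.1 q.2.1 q.2.2))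
    (hh0 : ∀ θ u, h θ u 0 = 0)
    (hhρ : ∀ θ u, deriv (fun ρ => h θ u ρ) 0 = 0)
    (F : (Fin p → ℝ) → (Fin d → ℝ) → ℝ → ℝ → (Fin p → ℝ))
    (hF : ∀ θ u ε ρ, F θ u ε ρ = a θ u + ε • b θ u + ε • (ρ • c θ u + h θ u ρ))
    (ha0 : a θ₀ u₀ = 0)
    (Ja : Matrix (Fin p) (Fin p) ℝ)
    (hJa : ∀ i j, Ja i j = fderiv ℝ (fun θ => a θ u₀ i) θ₀ (Pi.single j 1))
    (hJaInv : IsUnit Ja.det)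
    (G : (Fin d → ℝ) → ℝ → ℝ → (Fin p → ℝ))
    (V : Set ((Fin d → ℝ) × ℝ × ℝ)) (hVopen : IsOpen V)
    (hV : ((u₀, 0, 0) : (Fin d → ℝ) × ℝ × ℝ) ∈ V)
    (hG : ContDiffOn ℝ 2 (fun q : (Fin d → ℝ) × ℝ × ℝ => G q.1 q.2.1 q.2.2) V)
    (hG0 : G u₀ 0 0 = θ₀)
    (hFG : ∀ q ∈ V, F (G q.1 q.2.1 q.2.2) q.1 q.2.1 q.2.2 = 0)
    (k₀ : Fin p → ℝ) (hk₀ : k₀ = -(Ja⁻¹ *ᵥ c θ₀ u₀))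
    (u : ℕ → Fin d → ℝ) (hu : Tendsto u atTop (nhds u₀))
    (δ : ℕ → Fin p → ℝ)
    (hδ : ∀ n : ℕ, δ n = G (u n) ((n:ℝ)⁻¹) ((n:ℝ)⁻¹) - G (u n) ((n:ℝ)⁻¹) 0)
    (δhat : ℕ → Fin p → ℝ)
    (hδhat : ∀ n : ℕ,
      δhat n = ((n:ℝ)⁻¹) • deriv (fun ρ => G (u n) ((n:ℝ)⁻¹) ρ) 0) :
    Tendsto (fun n : ℕ => ((n:ℝ)^2) • δhat n) atTop (nhds k₀) ∧
    Tendsto (fun n : ℕ => ((n:ℝ)^2) • δ n) atTop (nhds k₀) :=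
  stmt10_general p d θ₀ u₀ a b c ha hb hc h hh hhρ F hF Ja hJa hJaInv G V hVopen hV hG hG0 hFG k₀
    hk₀ u hu δ hδ δhat hδhat
end

section
/- Let p₁, p₂ be positive integers and write points of ℝ^{p₁+p₂} as pairs (v, τ) with v ∈ ℝ^{p₁}, τ ∈ ℝ^{p₂}. Let F = (F_ω, F_τ) : ℝ^{p₁+p₂} × ℝ × ℝ → ℝ^{p₁} × ℝ^{p₂} be continuously differentiable, and let G = (G_v, G_τ) : ℝ × ℝ → ℝ^{p₁} × ℝ^{p₂} be continuously differentiable on a neighborhood of (0, 0) with F(G(ε, ρ); ε, ρ) = 0 there. Suppose there is a neighborhood of ρ = 0 on which, for all such ρ: (i) ∂F_ω/∂ρ(θ; 0, ρ) = 0 for all θ in a neighborhood of G(0, ρ); (ii) the p₁×p₂ block ∇_τF_ω(G(0, ρ); 0, ρ) is the zero matrix; and (iii) the p₁×p₁ block ∇_vF_ω(G(0, ρ); 0, ρ) is invertible. Then ∂G_v/∂ρ(0, ρ) = 0 for all ρ in a neighborhood of 0. -/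
/-!
Differentiating `F(G(0, r); 0, r) = 0` in `r` and taking the first component gives
`∇_vF_ω · ∂_ρG_v + ∇_τF_ω · ∂_ρG_τ + ∂F_ω/∂ρ = 0` at `(G(0, ρ); 0, ρ)`. The last two terms
vanish by (ii) and (i), so `∂_ρG_v` lies in the kernel of the invertible block `∇_vF_ω`.
-/

open Filter Topology

section Partials

variable {𝕜 : Type*} [NontriviallyNormedField 𝕜]
  {E₁ E₂ F : Type*} [NormedAddCommGroup E₁] [NormedSpace 𝕜 E₁]
  [NormedAddCommGroup E₂] [NormedSpace 𝕜 E₂] [NormedAddCommGroup F] [NormedSpace 𝕜 F]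

theorem HasFDerivAt.apply_eq_partials {Φ : (E₁ × E₂) × 𝕜 → F} {L : (E₁ × E₂) × 𝕜 →L[𝕜] F}
    {x : E₁ × E₂} {r : 𝕜} (hΦ : HasFDerivAt Φ L (x, r)) (a : E₁) (b : E₂) (c : 𝕜) :
    L ((a, b), c) = fderiv 𝕜 (fun v => Φ ((v, x.2), r)) x.1 a
      + fderiv 𝕜 (fun τ => Φ ((x.1, τ), r)) x.2 b + c • deriv (fun s => Φ (x, s)) r := by
  have hv : HasFDerivAt (fun v => Φ ((v, x.2), r)) (L.comp
      (((ContinuousLinearMap.id 𝕜 E₁).prod 0).prod 0)) x.1 :=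
    hΦ.comp x.1 (((hasFDerivAt_id x.1).prodMk (hasFDerivAt_const x.2 x.1)).prodMk
      (hasFDerivAt_const r x.1))
  have hτ : HasFDerivAt (fun τ => Φ ((x.1, τ), r)) (L.comp
      (((0 : E₂ →L[𝕜] E₁).prod (ContinuousLinearMap.id 𝕜 E₂)).prod 0)) x.2 :=
    hΦ.comp x.2 (((hasFDerivAt_const x.1 x.2).prodMk (hasFDerivAt_id x.2)).prodMk
      (hasFDerivAt_const r x.2))
  have hr : HasDerivAt (fun s => Φ (x, s)) (L (0, 1)) r :=
    hΦ.comp_hasDerivAt r ((hasDerivAt_const r x).prodMk (hasDerivAt_id r))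
  rw [hv.fderiv, hτ.fderiv, hr.deriv, ContinuousLinearMap.comp_apply,
    ContinuousLinearMap.comp_apply, ← map_smul, ← map_add, ← map_add]
  simp

theorem deriv_fst_eq_zero_of_comp_eq_zero {Φ : (E₁ × E₂) × 𝕜 → F} {γ : 𝕜 → E₁ × E₂} {ρ : 𝕜}
    (hΦ : DifferentiableAt 𝕜 Φ (γ ρ, ρ)) (hγ : DifferentiableAt 𝕜 γ ρ)
    (hzero : (fun r => Φ (γ r, r)) =ᶠ[𝓝 ρ] fun _ => 0)
    (hτ : fderiv 𝕜 (fun τ => Φ (((γ ρ).1, τ), ρ)) (γ ρ).2 = 0)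
    (hr : deriv (fun r => Φ (γ ρ, r)) ρ = 0)
    (hv : Function.Injective (fderiv 𝕜 (fun v => Φ ((v, (γ ρ).2), ρ)) (γ ρ).1)) :
    deriv (fun r => (γ r).1) ρ = 0 := by
  have hchain : HasDerivAt (fun r => Φ (γ r, r)) (fderiv 𝕜 Φ (γ ρ, ρ) (deriv γ ρ, 1)) ρ :=
    hΦ.hasFDerivAt.comp_hasDerivAt (f := fun r => (γ r, r)) ρ
      (hγ.hasDerivAt.prodMk (hasDerivAt_id' ρ))
  have hvanish : fderiv 𝕜 Φ (γ ρ, ρ) (deriv γ ρ, 1) = 0 := by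
    rw [← hchain.deriv, hzero.deriv_eq, deriv_const]
  rw [hΦ.hasFDerivAt.apply_eq_partials, hτ, hr] at hvanish
  have hfst : HasDerivAt (fun r => (γ r).1) (deriv γ ρ).1 ρ := hγ.hasDerivAt.fst
  rw [hfst.deriv]
  exact hv (by simpa using hvanish)

end Partials

section Coordinates

variable {𝕜 : Type*} [NontriviallyNormedField 𝕜] {ι κ : Type*} [Fintype ι] [DecidableEq ι]
  {f : (ι → 𝕜) → κ → 𝕜} {x : ι → 𝕜}

theorem toMatrix'_fderiv (hf : DifferentiableAt 𝕜 f x) :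
    LinearMap.toMatrix' (fderiv 𝕜 f x : (ι → 𝕜) →ₗ[𝕜] κ → 𝕜)
      = Matrix.of fun i j => fderiv 𝕜 (fun y => f y i) x (Pi.single j 1) := by
  ext i j
  simp [fderiv_apply hf]

theorem fderiv_eq_zero_of_forall_fderiv_apply_single (hf : DifferentiableAt 𝕜 f x)
    (h : ∀ i j, fderiv 𝕜 (fun y => f y i) x (Pi.single j 1) = 0) : fderiv 𝕜 f x = 0 := by
  have hmat : LinearMap.toMatrix' (fderiv 𝕜 f x : (ι → 𝕜) →ₗ[𝕜] κ → 𝕜) = 0 := by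
    rw [toMatrix'_fderiv hf]
    ext i j
    exact h i j
  exact ContinuousLinearMap.coe_injective (LinearMap.toMatrix'.injective (by simpa using hmat))

theorem injective_fderiv_of_isUnit_det {f : (ι → 𝕜) → ι → 𝕜} (hf : DifferentiableAt 𝕜 f x)
    (h : IsUnit (Matrix.of fun i j => fderiv 𝕜 (fun y => f y i) x (Pi.single j 1)).det) :
    Function.Injective (fderiv 𝕜 f x) := by
  rw [← toMatrix'_fderiv hf, LinearMap.det_toMatrix', ← LinearMap.isUnit_iff_isUnit_det] at h
  exact (Module.End.isUnit_iff _ |>.1 h).injective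

end Coordinates

theorem stmt18_general (p₁ p₂ : ℕ)
    (F : ((Fin p₁ → ℝ) × (Fin p₂ → ℝ)) → ℝ → ℝ → (Fin p₁ → ℝ) × (Fin p₂ → ℝ))
    (hF : ContDiff ℝ 1
      (fun q : ((Fin p₁ → ℝ) × (Fin p₂ → ℝ)) × ℝ × ℝ => F q.1 q.2.1 q.2.2))
    (G : ℝ × ℝ → (Fin p₁ → ℝ) × (Fin p₂ → ℝ))
    (V : Set (ℝ × ℝ)) (hVopen : IsOpen V) (hV : ((0:ℝ), (0:ℝ)) ∈ V)
    (hG : ContDiffOn ℝ 1 G V)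
    (hFG : ∀ q ∈ V, F (G q) q.1 q.2 = 0)
    (W : Set ℝ) (hW : W ∈ nhds (0:ℝ))
    (hi : ∀ ρ ∈ W, ∀ᶠ θ in nhds (G (0, ρ)), deriv (fun r => (F θ 0 r).1) ρ = 0)
    (hii : ∀ ρ ∈ W, ∀ (i : Fin p₁) (j : Fin p₂),
      fderiv ℝ (fun τ => (F ((G (0, ρ)).1, τ) 0 ρ).1 i) (G (0, ρ)).2 (Pi.single j 1) = 0)
    (hiii : ∀ ρ ∈ W, IsUnit (Matrix.of fun i j : Fin p₁ =>
      fderiv ℝ (fun w => (F (w, (G (0, ρ)).2) 0 ρ).1 i) (G (0, ρ)).1 (Pi.single j 1)).det) :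
    ∀ᶠ ρ in nhds (0:ℝ), deriv (fun r => (G (0, r)).1) ρ = 0 := by
  set Φ : ((Fin p₁ → ℝ) × (Fin p₂ → ℝ)) × ℝ → Fin p₁ → ℝ := fun q => (F q.1 0 q.2).1
  have hΦ : Differentiable ℝ Φ := by
    have hF' : Differentiable ℝ _ := hF.differentiable one_ne_zero
    fun_prop
  have hslice : IsOpen {r : ℝ | ((0 : ℝ), r) ∈ V} := hVopen.preimage (by fun_prop)
  filter_upwards [hW, hslice.mem_nhds hV] with ρ hρW hρV
  have hγ : DifferentiableAt ℝ (fun r => G (0, r)) ρ :=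
    (hG.contDiffAt (hVopen.mem_nhds hρV)).differentiableAt one_ne_zero |>.comp ρ (by fun_prop)
  refine deriv_fst_eq_zero_of_comp_eq_zero (Φ := Φ) (hΦ _) hγ ?_ ?_ (hi ρ hρW).self_of_nhds
    (injective_fderiv_of_isUnit_det (by fun_prop) (hiii ρ hρW))
  · filter_upwards [hslice.mem_nhds hρV] with r hr
    simp [Φ, hFG (0, r) hr]
  · exact fderiv_eq_zero_of_forall_fderiv_apply_single (by fun_prop) (hii ρ hρW)

/-- if along `ε = 0` the `ρ`-derivative of `F_ω` vanishes near
the solution, the mixed block `∇_τF_ω` is zero, and the block `∇_vF_ω` is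
invertible, then `∂G_v/∂ρ(0, ρ) = 0` for all `ρ` near `0`. -/
theorem stmt18 (p₁ p₂ : ℕ) (hp₁ : 0 < p₁) (hp₂ : 0 < p₂)
    (F : ((Fin p₁ → ℝ) × (Fin p₂ → ℝ)) → ℝ → ℝ → (Fin p₁ → ℝ) × (Fin p₂ → ℝ))
    (hF : ContDiff ℝ 1
      (fun q : ((Fin p₁ → ℝ) × (Fin p₂ → ℝ)) × ℝ × ℝ => F q.1 q.2.1 q.2.2))
    (G : ℝ × ℝ → (Fin p₁ → ℝ) × (Fin p₂ → ℝ))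
    (V : Set (ℝ × ℝ)) (hVopen : IsOpen V) (hV : ((0:ℝ), (0:ℝ)) ∈ V)
    (hG : ContDiffOn ℝ 1 G V)
    (hFG : ∀ q ∈ V, F (G q) q.1 q.2 = 0)
    (W : Set ℝ) (hW : W ∈ nhds (0:ℝ))
    (hi : ∀ ρ ∈ W, ∀ᶠ θ in nhds (G (0, ρ)), deriv (fun r => (F θ 0 r).1) ρ = 0)
    (hii : ∀ ρ ∈ W, ∀ (i : Fin p₁) (j : Fin p₂),
      fderiv ℝ (fun τ => (F ((G (0, ρ)).1, τ) 0 ρ).1 i) (G (0, ρ)).2 (Pi.single j 1) = 0)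
    (hiii : ∀ ρ ∈ W, IsUnit (Matrix.of fun i j : Fin p₁ =>
      fderiv ℝ (fun w => (F (w, (G (0, ρ)).2) 0 ρ).1 i) (G (0, ρ)).1 (Pi.single j 1)).det) :
    ∀ᶠ ρ in nhds (0:ℝ), deriv (fun r => (G (0, r)).1) ρ = 0 :=
  stmt18_general p₁ p₂ F hF G V hVopen hV hG hFG W hW hi hii hiii
end
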